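/- arXiv:1012.2503 — 2 statements merged into one kernel-verified Lean document; each statement's English description precedes it below -/
import Mathlib

section
/- For every ε > 0, the annealed probability 𝐏(|T_N − T̃_N|/N^{1/s} > ε) tends to 0 as N → ∞; that is, the occupation time of [0,N) and the hitting time of N have the same asymptotic behaviour at scale N^{1/s}. -/
open MeasureTheory ProbabilityTheory Filter Set
open scoped ENNReal NNReal Topology Classical

noncomputable section

namespace RWRE

/-- The space of environments: an assignment of a probability `ω i` to each site `i`. -/
abbrev Env : Type := ℤ → ℝ

/-- The space of trajectories of the walk. -/
abbrev Traj : Type := ℕ → ℤ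

/-- `alpha ω i = q_i / p_i`. -/
def alpha (ω : Env) (i : ℤ) : ℝ := (1 - ω i) / ω i

/-- The number of visits of the trajectory `X` to the site `n` (the start counts as a visit). -/
def visits (X : Traj) (n : ℤ) : ℕ := Set.ncard {t : ℕ | X t = n}

/-- The occupation time `T_N` of `[0, N)`. -/
def occTime (X : Traj) (N : ℕ) : ℕ := ∑ n ∈ Finset.range N, visits X (n : ℤ)

/-- The hitting time `T̃_N` of the site `N`. -/
def hitTime (X : Traj) (N : ℕ) : ℕ := sInf {t : ℕ | X t = (N : ℤ)}

/-- `μ` is the law of the nearest-neighbour random walk on `ℤ` in the environment `ω`,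
starting at `0`: from a site `x` the walk jumps to `x+1` with probability `ω x` and to
`x-1` with probability `1 - ω x`. -/
structure IsQuenchedLaw (ω : Env) (μ : Measure Traj) : Prop where
  prob : IsProbabilityMeasure μ
  start : μ {X | X 0 = 0} = 1
  nearest : μ {X | ∀ t, X (t+1) = X t + 1 ∨ X (t+1) = X t - 1} = 1
  step : ∀ (n : ℕ) (x : Traj),
    μ {X | (∀ k ≤ n, X k = x k) ∧ X (n+1) = x n + 1}
      = ENNReal.ofReal (ω (x n)) * μ {X | ∀ k ≤ n, X k = x k}

/-- `ρ_n`: the quenched expectation of the number of visits to `n`. -/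
def rho (Pq : Env → Measure Traj) (ω : Env) (n : ℤ) : ℝ :=
  ∫ X, (visits X n : ℝ) ∂(Pq ω)

/-- `𝔼_ω (T_N)`: the quenched expectation of the occupation time of `[0,N)`. -/
def qET (Pq : Env → Measure Traj) (ω : Env) (N : ℕ) : ℝ :=
  ∫ X, (occTime X N : ℝ) ∂(Pq ω)

/-- Covariance of two real random variables. -/
def mCov {α : Type*} [MeasurableSpace α] (μ : Measure α) (f g : α → ℝ) : ℝ :=
  ∫ x, f x * g x ∂μ - (∫ x, f x ∂μ) * (∫ x, g x ∂μ)

/-- Correlation coefficient of two real random variables. -/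
def mCorr {α : Type*} [MeasurableSpace α] (μ : Measure α) (f g : α → ℝ) : ℝ :=
  mCov μ f g / (Real.sqrt (mCov μ f f) * Real.sqrt (mCov μ g g))

/-- Assumptions on the i.i.d. random environment: (A) positive drift of the log-ratios,
(B) the Kesten root `s`, (C) uniform ellipticity, (D) non-arithmeticity of `log (q/p)`. -/
structure EnvHyp (P : Measure Env) (s : ℝ) : Prop where
  prob : IsProbabilityMeasure P
  indep : iIndepFun (fun i (ω : Env) => ω i) P
  ident : ∀ i : ℤ, IdentDistrib (fun ω : Env => ω i) (fun ω : Env => ω 0) P P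
  elliptic : ∃ ε₀ > 0, ∀ᵐ ω ∂P, ∀ i, ε₀ ≤ ω i ∧ ω i ≤ 1 - ε₀
  drift : 0 < ∫ ω, Real.log (ω 0 / (1 - ω 0)) ∂P
  spos : 0 < s
  crit : ∫ ω, (alpha ω 0) ^ s ∂P = 1
  nonarith : ¬ ∃ a : ℝ, ∀ᵐ ω ∂P, ∃ k : ℤ, Real.log (alpha ω 0) = (k : ℝ) * a

/-- `Pq` is a measurable family of quenched walk laws over the environment law `P`. -/
structure WalkHyp (P : Measure Env) (Pq : Env → Measure Traj) : Prop where
  quenched : ∀ᵐ ω ∂P, IsQuenchedLaw ω (Pq ω)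
  meas : ∀ A : Set Traj, MeasurableSet A → Measurable fun ω => Pq ω A

/-!
Before its first visit to `N` the walk is either in `[0, N)` or at a negative site, and
afterwards it can only add time in `[0, N)` by coming back below `N`. Hence `|T_N - T̃_N|` is at
most the total time spent at negative sites, or the time the walk restarted at `N` spends below
its starting point. Both are almost surely finite: by the gambler's-ruin formula, the probability
of ever descending `n` levels is a tail of the series `∑ₖ ∏ α`, which converges because the strong
law of large numbers makes `∑ log α` drift to `-∞`. By the strong Markov property at `T̃_N` and
the shift invariance of the i.i.d. environment, the second quantity has the same annealed law as
the first, so the probability that either exceeds `ε N^{1/s} → ∞` tends to `0`.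
-/

/-! ### Shift invariance of the environment -/

def shiftEnv (x : ℤ) (ω : Env) : Env := fun i => ω (i + x)

@[simp] lemma shiftEnv_apply (x : ℤ) (ω : Env) (i : ℤ) : shiftEnv x ω i = ω (i + x) := rfl

lemma shiftEnv_zero (ω : Env) : shiftEnv 0 ω = ω := by
  funext i; simp

lemma shiftEnv_shiftEnv (x y : ℤ) (ω : Env) : shiftEnv y (shiftEnv x ω) = shiftEnv (x + y) ω := by
  funext i; simp [add_assoc, add_comm x y]

lemma measurable_shiftEnv (x : ℤ) : Measurable (shiftEnv x) :=
  measurable_pi_lambda _ fun i => measurable_pi_apply (i + x)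

namespace EnvHyp

variable {P : Measure Env} {s : ℝ}

lemma eq_infinitePi (hEnv : EnvHyp P s) :
    P = Measure.infinitePi (fun _ : ℤ => P.map (fun ω => ω 0)) := by
  have h := hEnv.indep.map_fun_eq_infinitePi_map (fun i => measurable_pi_apply i)
  rw [Measure.map_id'] at h
  nth_rw 1 [h]
  exact congrArg _ (funext fun i => (hEnv.ident i).map_eq)

lemma map_shiftEnv (hEnv : EnvHyp P s) (x : ℤ) : P.map (shiftEnv x) = P := by
  have hshift : shiftEnv x = Equiv.piCongrLeft (fun _ => ℝ) (Equiv.subRight x) := by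
    funext ω i
    simp [Equiv.piCongrLeft_apply_eq_cast]
  have := hEnv.prob
  have : IsProbabilityMeasure (P.map fun ω : Env => ω 0) :=
    Measure.isProbabilityMeasure_map (measurable_pi_apply 0).aemeasurable
  rw [hshift, hEnv.eq_infinitePi]
  exact Measure.infinitePi_map_piCongrLeft (μ := fun _ : ℤ => _) _

lemma ae_shiftEnv (hEnv : EnvHyp P s) (x : ℤ) {Q : Env → Prop} (h : ∀ᵐ ω ∂P, Q ω) :
    ∀ᵐ ω ∂P, Q (shiftEnv x ω) :=
  ae_of_ae_map (measurable_shiftEnv x).aemeasurable (by rwa [hEnv.map_shiftEnv x])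

lemma lintegral_shiftEnv (hEnv : EnvHyp P s) (x : ℤ) {f : Env → ℝ≥0∞} (hf : Measurable f) :
    ∫⁻ ω, f (shiftEnv x ω) ∂P = ∫⁻ ω, f ω ∂P := by
  conv_rhs => rw [← hEnv.map_shiftEnv x]
  rw [lintegral_map hf (measurable_shiftEnv x)]

lemma ae_mem_Ioo (hEnv : EnvHyp P s) : ∀ᵐ ω ∂P, ∀ i, 0 < ω i ∧ ω i < 1 := by
  obtain ⟨ε₀, hε₀, hell⟩ := hEnv.elliptic
  filter_upwards [hell] with ω hω i
  constructor <;> linarith [hω i]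

lemma integrable_log_alpha (hEnv : EnvHyp P s) (i : ℤ) :
    Integrable (fun ω => Real.log (alpha ω i)) P := by
  have := hEnv.prob
  obtain ⟨ε₀, hε₀, hell⟩ := hEnv.elliptic
  have hmeas : Measurable fun ω : Env => Real.log (alpha ω i) :=
    Real.measurable_log.comp (((measurable_pi_apply i).const_sub 1).div (measurable_pi_apply i))
  refine Integrable.of_bound hmeas.aestronglyMeasurable (Real.log ((1 - ε₀) / ε₀)) ?_
  filter_upwards [hell] with ω hω
  obtain ⟨h1, h2⟩ := hω i
  have hp : 0 < ω i := hε₀.trans_le h1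
  have hq : 0 < 1 - ω i := by linarith
  -- `ε₀ ≤ p ≤ 1 - ε₀` confines `α = q / p` to `[c⁻¹, c]` with `c = (1 - ε₀) / ε₀`
  have hup : alpha ω i ≤ (1 - ε₀) / ε₀ := by
    rw [alpha, div_le_div_iff₀ hp hε₀]; nlinarith
  have hlow : ((1 - ε₀) / ε₀)⁻¹ ≤ alpha ω i := by
    rw [inv_div, alpha, div_le_div_iff₀ (by linarith) hp]; nlinarith
  have hα : 0 < alpha ω i := div_pos hq hp
  rw [Real.norm_eq_abs, abs_le]
  constructor
  · have := Real.log_le_log (inv_pos.2 (div_pos (by linarith) hε₀)) hlow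
    rw [Real.log_inv] at this
    linarith
  · exact Real.log_le_log hα hup

lemma integral_log_alpha_neg (hEnv : EnvHyp P s) : ∫ ω, Real.log (alpha ω 0) ∂P < 0 := by
  have hcongr : ∫ ω, Real.log (alpha ω 0) ∂P = ∫ ω, -Real.log (ω 0 / (1 - ω 0)) ∂P := by
    refine integral_congr_ae ?_
    filter_upwards [hEnv.ae_mem_Ioo] with ω hω
    obtain ⟨hp, hp1⟩ := hω 0
    rw [alpha, Real.log_div (by linarith) hp.ne', Real.log_div hp.ne' (by linarith)]
    ring
  rw [hcongr, integral_neg]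
  linarith [hEnv.drift]

lemma tendsto_avg_log_alpha (hEnv : EnvHyp P s) {g : ℕ → ℤ} (hg : Function.Injective g) :
    ∀ᵐ ω ∂P, Tendsto (fun n : ℕ => (n : ℝ)⁻¹ * ∑ j ∈ Finset.range n, Real.log (alpha ω (g j)))
      atTop (𝓝 (∫ ω, Real.log (alpha ω 0) ∂P)) := by
  let f : ℝ → ℝ := fun r => Real.log ((1 - r) / r)
  have hf : Measurable f :=
    Real.measurable_log.comp ((measurable_const.sub measurable_id).div measurable_id)
  have hident : ∀ j, IdentDistrib (fun ω : Env => f (ω (g j))) (fun ω => f (ω (g 0))) P P :=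
    fun j => ((hEnv.ident (g j)).trans (hEnv.ident (g 0)).symm).comp hf
  have hindep : Pairwise fun i j =>
      IndepFun (fun ω : Env => f (ω (g i))) (fun ω => f (ω (g j))) P :=
    fun i j hij => (hEnv.indep.indepFun (hg.ne hij)).comp hf hf
  have hmean : ∫ ω, f (ω (g 0)) ∂P = ∫ ω, Real.log (alpha ω 0) ∂P :=
    ((hEnv.ident (g 0)).comp hf).integral_eq
  have hint : Integrable (fun ω : Env => f (ω (g 0))) P := hEnv.integrable_log_alpha (g 0)
  have hslln := strong_law_ae (fun j (ω : Env) => f (ω (g j))) hint hindep hident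
  rw [← hmean]
  filter_upwards [hslln] with ω hω
  simpa only [smul_eq_mul, f, alpha] using hω

end EnvHyp

lemma summable_prod_of_tendsto_avg_log {a : ℕ → ℝ} (ha : ∀ j, 0 < a j) {L : ℝ} (hL : L < 0)
    (h : Tendsto (fun n : ℕ => (n : ℝ)⁻¹ * ∑ j ∈ Finset.range n, Real.log (a j)) atTop (𝓝 L)) :
    Summable fun n => ∏ j ∈ Finset.range n, a j := by
  refine Summable.of_norm_bounded_eventually_nat (summable_geometric_of_lt_one
    (Real.exp_pos (L / 2)).le (Real.exp_lt_one_iff.2 (by linarith))) ?_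
  filter_upwards [h.eventually_lt_const (by linarith : L < L / 2), eventually_gt_atTop 0]
    with n hn hn0
  have hn' : (0 : ℝ) < n := by exact_mod_cast hn0
  have hsum : ∑ j ∈ Finset.range n, Real.log (a j) ≤ n * (L / 2) := by
    rw [inv_mul_lt_iff₀ hn'] at hn; exact hn.le
  rw [Real.norm_of_nonneg (Finset.prod_nonneg fun j _ => (ha j).le), ← Real.exp_nat_mul,
    ← Finset.prod_congr rfl fun j _ => Real.exp_log (ha j), ← Real.exp_sum]
  exact Real.exp_le_exp.2 hsum

/-! ### Products of the ratios `α` -/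

def alphaProd (ω : Env) (a : ℤ) (k : ℕ) : ℝ := ∏ i ∈ Finset.range k, alpha ω (a + 1 + i)

def alphaSum (ω : Env) (a : ℤ) (j : ℕ) : ℝ := ∑ m ∈ Finset.range j, alphaProd ω a m

def alphaSeries (ω : Env) : ℝ := ∑' k, alphaProd ω 0 k

section AlphaProd

variable {ω : Env}

lemma alphaProd_pos (hα : ∀ i, 0 < alpha ω i) (a : ℤ) (k : ℕ) : 0 < alphaProd ω a k :=
  Finset.prod_pos fun _ _ => hα _

lemma alphaProd_add (ω : Env) (a : ℤ) (k l : ℕ) :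
    alphaProd ω a (k + l) = alphaProd ω a k * alphaProd ω (a + k) l := by
  unfold alphaProd
  rw [Finset.prod_range_add]
  congr 1
  refine Finset.prod_congr rfl fun i _ => ?_
  congr 1
  push_cast
  ring

lemma alphaProd_shiftEnv (x : ℤ) (ω : Env) (a : ℤ) (k : ℕ) :
    alphaProd (shiftEnv x ω) a k = alphaProd ω (a + x) k := by
  unfold alphaProd alpha
  refine Finset.prod_congr rfl fun i _ => ?_
  simp only [shiftEnv_apply]
  ring_nf

lemma alphaSeries_nonneg (hα : ∀ i, 0 < alpha ω i) : 0 ≤ alphaSeries ω :=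
  tsum_nonneg fun k => (alphaProd_pos hα 0 k).le

lemma one_le_alphaSum (hα : ∀ i, 0 < alpha ω i) (a : ℤ) {L : ℕ} (hL : 0 < L) :
    1 ≤ alphaSum ω a L := by
  have h := Finset.single_le_sum (f := fun m => alphaProd ω a m)
    (fun i _ => (alphaProd_pos hα a i).le) (Finset.mem_range.mpr hL)
  simpa [alphaProd, alphaSum] using h

end AlphaProd

/-- The environments in which the walk is well behaved: the walk from every site has its
quenched law, and the products of the `α`'s are summable to the right and vanish to the left. -/
structure GoodEnv (Pq : Env → Measure Traj) (ω : Env) : Prop where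
  pos : ∀ i, 0 < ω i
  lt_one : ∀ i, ω i < 1
  law : ∀ x : ℤ, IsQuenchedLaw (shiftEnv x ω) (Pq (shiftEnv x ω))
  summable : ∀ x : ℤ, Summable (alphaProd ω x)
  tendsto_left : ∀ x : ℤ, Tendsto (fun m : ℕ => alphaProd ω (x - m) m) atTop (𝓝 0)

lemma ae_goodEnv {P : Measure Env} {s : ℝ} {Pq : Env → Measure Traj}
    (hEnv : EnvHyp P s) (hWalk : WalkHyp P Pq) : ∀ᵐ ω ∂P, GoodEnv Pq ω := by
  have hL := hEnv.integral_log_alpha_neg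
  have hα : ∀ᵐ ω ∂P, ∀ i, 0 < alpha ω i := by
    filter_upwards [hEnv.ae_mem_Ioo] with ω hω i
    exact div_pos (by linarith [hω i]) (hω i).1
  have hright : ∀ᵐ ω ∂P, Summable (alphaProd ω 0) := by
    filter_upwards [hα, hEnv.tendsto_avg_log_alpha (g := fun j : ℕ => 1 + (j : ℤ))
      fun a b h => by simpa using h] with ω hα h
    exact (summable_prod_of_tendsto_avg_log (fun j => hα _) hL h).congr fun n => by
      simp [alphaProd]
  have hleft : ∀ᵐ ω ∂P, Tendsto (fun m : ℕ => alphaProd ω (0 - m) m) atTop (𝓝 0) := by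
    filter_upwards [hα, hEnv.tendsto_avg_log_alpha (g := fun j : ℕ => -(j : ℤ))
      fun a b h => by simpa using h] with ω hα h
    refine (summable_prod_of_tendsto_avg_log (fun j => hα _) hL h).tendsto_atTop_zero.congr
      fun m => ?_
    unfold alphaProd
    rw [← Finset.prod_range_reflect]
    refine Finset.prod_congr rfl fun i hi => ?_
    rw [Finset.mem_range] at hi
    congr 1
    omega
  -- the conditions at every site follow from those at `0` by shift invariance
  filter_upwards [hEnv.ae_mem_Ioo, ae_all_iff.2 fun x => hEnv.ae_shiftEnv x hWalk.quenched,
    ae_all_iff.2 fun x => hEnv.ae_shiftEnv x hright,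
    ae_all_iff.2 fun x => hEnv.ae_shiftEnv x hleft] with ω hω hlaw hsum hlim
  refine ⟨fun i => (hω i).1, fun i => (hω i).2, hlaw, fun x => ?_, fun x => ?_⟩
  · exact (hsum x).congr fun k => by rw [alphaProd_shiftEnv, zero_add]
  · simpa [alphaProd_shiftEnv, neg_add_eq_sub] using hlim x

namespace GoodEnv

variable {Pq : Env → Measure Traj} {ω : Env}

lemma alpha_pos (hg : GoodEnv Pq ω) (i : ℤ) : 0 < alpha ω i :=
  div_pos (by linarith [hg.lt_one i]) (hg.pos i)

lemma mem_Icc (hg : GoodEnv Pq ω) (i : ℤ) : ω i ∈ Set.Icc 0 1 :=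
  ⟨(hg.pos i).le, (hg.lt_one i).le⟩

lemma isQuenchedLaw (hg : GoodEnv Pq ω) : IsQuenchedLaw ω (Pq ω) := by
  simpa [shiftEnv_zero] using hg.law 0

lemma isProbabilityMeasure (hg : GoodEnv Pq ω) : IsProbabilityMeasure (Pq ω) :=
  hg.isQuenchedLaw.prob

lemma shift (hg : GoodEnv Pq ω) (x : ℤ) : GoodEnv Pq (shiftEnv x ω) := by
  refine ⟨fun i => hg.pos _, fun i => hg.lt_one _, fun y => ?_, fun y => ?_, fun y => ?_⟩
  · rw [shiftEnv_shiftEnv]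
    exact hg.law (x + y)
  · exact (hg.summable (y + x)).congr fun k => by rw [alphaProd_shiftEnv]
  · simpa [alphaProd_shiftEnv, sub_add_eq_add_sub] using hg.tendsto_left (y + x)

end GoodEnv

/-! ### Nearest-neighbour paths and the Markov property -/

def nearestWalks : Set Traj :=
  {X | X 0 = 0 ∧ ∀ t, X (t + 1) = X t + 1 ∨ X (t + 1) = X t - 1}

def shiftTraj (k : ℕ) (c : ℤ) (X : Traj) : Traj := fun t => X (t + k) - c

def hits (c : ℤ) : Set Traj := {X | ∃ t, X t = c}

def hitsBefore (c d : ℤ) : Set Traj := {X | ∃ t, X t = c ∧ ∀ u ≤ t, X u ≠ d}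

def avoids (c d : ℤ) : Set Traj := {X | ∀ t, X t ≠ c ∧ X t ≠ d}

def negTimesGt (m : ℕ) : Set Traj := {X | ∃ T : Finset ℕ, T.card = m + 1 ∧ ∀ t ∈ T, X t < 0}

lemma measurable_shiftTraj (k : ℕ) (c : ℤ) : Measurable (shiftTraj k c) := by
  unfold shiftTraj; fun_prop

lemma measurableSet_hits (c : ℤ) : MeasurableSet (hits c) := by
  unfold hits; measurability

lemma measurableSet_hitsBefore (c d : ℤ) : MeasurableSet (hitsBefore c d) := by
  unfold hitsBefore; measurability

lemma measurableSet_avoids (c d : ℤ) : MeasurableSet (avoids c d) := by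
  unfold avoids; measurability

lemma measurableSet_negTimesGt (m : ℕ) : MeasurableSet (negTimesGt m) := by
  unfold negTimesGt; measurability

lemma shiftTraj_mem_nearestWalks {X : Traj} (hX : X ∈ nearestWalks) (k : ℕ) :
    shiftTraj k (X k) X ∈ nearestWalks := by
  refine ⟨by simp [shiftTraj], fun u => ?_⟩
  simp only [shiftTraj, show u + 1 + k = u + k + 1 by omega]
  rcases hX.2 (u + k) with h | h <;> omega

lemma exists_eq_of_mem_nearestWalks {X : Traj} (hX : X ∈ nearestWalks) {u : ℕ} {m : ℤ}
    (h₁ : min (X 0) (X u) ≤ m) (h₂ : m ≤ max (X 0) (X u)) : ∃ v ≤ u, X v = m := by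
  induction u with
  | zero => exact ⟨0, le_rfl, by omega⟩
  | succ u ih =>
    by_cases hm : min (X 0) (X u) ≤ m ∧ m ≤ max (X 0) (X u)
    · obtain ⟨v, hv, hvm⟩ := ih hm.1 hm.2
      exact ⟨v, by omega, hvm⟩
    · exact ⟨u + 1, le_rfl, by rcases hX.2 u with h | h <;> omega⟩

lemma le_of_mem_nearestWalks {X : Traj} (hX : X ∈ nearestWalks) (u : ℕ) : X u ≤ u := by
  induction u with
  | zero => simp [hX.1]
  | succ u ih => push_cast; rcases hX.2 u with h | h <;> omega

lemma IsQuenchedLaw.measure_compl_nearestWalks {ω : Env} {μ : Measure Traj}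
    (h : IsQuenchedLaw ω μ) : μ nearestWalksᶜ = 0 := by
  have := h.prob
  have hstart : μ {X : Traj | X 0 = 0}ᶜ = 0 :=
    (prob_compl_eq_zero_iff (measurableSet_eq_fun (measurable_pi_apply 0) measurable_const)).2
      h.start
  have hnearest :
      μ {X : Traj | ∀ t, X (t + 1) = X t + 1 ∨ X (t + 1) = X t - 1}ᶜ = 0 :=
    (prob_compl_eq_zero_iff (by measurability)).2 h.nearest
  refine measure_mono_null (fun X hX => ?_) (measure_union_null hstart hnearest)
  by_contra hX'
  obtain ⟨h0, h1⟩ := not_or.1 hX'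
  exact hX ⟨not_not.1 h0, not_not.1 h1⟩

lemma IsQuenchedLaw.ae_mem_nearestWalks {ω : Env} {μ : Measure Traj} (h : IsQuenchedLaw ω μ) :
    ∀ᵐ X ∂μ, X ∈ nearestWalks :=
  h.measure_compl_nearestWalks

def stepProb (ω : Env) (a b : ℤ) : ℝ :=
  if b = a + 1 then ω a else if b = a - 1 then 1 - ω a else 0

def prefixCyl (k : ℕ) (z : ℕ → ℤ) : Set Traj := {X | ∀ j ≤ k, X j = z j}

def pathWeight (ω : Env) (k : ℕ) (z : ℕ → ℤ) : ℝ :=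
  (if z 0 = 0 then 1 else 0) * ∏ j ∈ Finset.range k, stepProb ω (z j) (z (j + 1))

def prefixCyls : Set (Set Traj) := {S | ∃ k z, S = prefixCyl k z}

lemma measurableSet_prefixCyl (k : ℕ) (z : ℕ → ℤ) : MeasurableSet (prefixCyl k z) := by
  unfold prefixCyl; measurability

lemma prefixCyl_zero (z : ℕ → ℤ) : prefixCyl 0 z = {X : Traj | X 0 = z 0} := by
  ext X; simp [prefixCyl]

lemma prefixCyl_succ (k : ℕ) (z : ℕ → ℤ) :
    prefixCyl (k + 1) z = prefixCyl k z ∩ {X : Traj | X (k + 1) = z (k + 1)} := by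
  ext X
  simp only [prefixCyl, Set.mem_inter_iff, Set.mem_ofPred_eq]
  exact ⟨fun h => ⟨fun j hj => h j (by omega), h _ le_rfl⟩,
    fun h j hj => (Nat.le_succ_iff.1 hj).elim (h.1 j) fun e => e ▸ h.2⟩

def pathPrefix (k : ℕ) (X : Traj) : Fin (k + 1) → ℤ := fun j => X j

lemma measurable_pathPrefix (k : ℕ) : Measurable (pathPrefix k) :=
  measurable_pi_lambda _ fun j => measurable_pi_apply (j : ℕ)

lemma pathPrefix_preimage_singleton (k : ℕ) (v : Fin (k + 1) → ℤ) :
    pathPrefix k ⁻¹' {v} = prefixCyl k fun j => if h : j < k + 1 then v ⟨j, h⟩ else 0 := by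
  ext X
  simp only [Set.mem_preimage, Set.mem_singleton_iff, prefixCyl, Set.mem_ofPred_eq, funext_iff,
    pathPrefix]
  exact ⟨fun h j hj => by rw [dif_pos (by omega), ← h], fun h j => by
    rw [h j (by omega), dif_pos j.2]⟩

lemma isPiSystem_prefixCyls : IsPiSystem prefixCyls := by
  have key : ∀ k m (z w : ℕ → ℤ), k ≤ m → (prefixCyl k z ∩ prefixCyl m w).Nonempty →
      prefixCyl k z ∩ prefixCyl m w = prefixCyl m w := by
    rintro k m z w hkm ⟨X, hX₁, hX₂⟩
    refine Set.inter_eq_right.2 fun Y hY j hj => ?_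
    rw [hY j (hj.trans hkm), ← hX₂ j (hj.trans hkm), hX₁ j hj]
  rintro _ ⟨k, z, rfl⟩ _ ⟨m, w, rfl⟩ hne
  rcases le_total k m with h | h
  · exact ⟨m, w, key k m z w h hne⟩
  · rw [Set.inter_comm] at hne ⊢
    exact ⟨k, z, key m k w z h hne⟩

lemma generateFrom_prefixCyls :
    (inferInstance : MeasurableSpace Traj) = MeasurableSpace.generateFrom prefixCyls := by
  refine le_antisymm ?_ (MeasurableSpace.generateFrom_le ?_)
  · have hcoord : ∀ n : ℕ,
        @Measurable Traj ℤ (MeasurableSpace.generateFrom prefixCyls) _ (fun X => X n) := by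
      intro n s _
      rw [show (fun X : Traj => X n) ⁻¹' s = pathPrefix n ⁻¹' {v | v (Fin.last n) ∈ s} from rfl,
        ← Set.biUnion_preimage_singleton]
      exact MeasurableSet.biUnion (Set.to_countable _) fun v _ =>
        MeasurableSpace.measurableSet_generateFrom ⟨n, _, pathPrefix_preimage_singleton n v⟩
    exact fun s hs =>
      (@measurable_pi_iff Traj ℕ (fun _ => ℤ) (.generateFrom prefixCyls) _ id).2 hcoord hs
  · rintro _ ⟨k, z, rfl⟩
    exact measurableSet_prefixCyl k z

lemma pathWeight_succ (ω : Env) (k : ℕ) (z : ℕ → ℤ) :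
    pathWeight ω (k + 1) z = pathWeight ω k z * stepProb ω (z k) (z (k + 1)) := by
  simp [pathWeight, Finset.prod_range_succ]

section Cylinders

variable {ω : Env} {μ : Measure Traj}

lemma stepProb_nonneg (hω : ∀ i, ω i ∈ Set.Icc 0 1) (a b : ℤ) : 0 ≤ stepProb ω a b := by
  unfold stepProb
  split_ifs
  · exact (hω a).1
  · linarith [(hω a).2]
  · exact le_rfl

lemma pathWeight_nonneg (hω : ∀ i, ω i ∈ Set.Icc 0 1) (k : ℕ) (z : ℕ → ℤ) :
    0 ≤ pathWeight ω k z :=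
  mul_nonneg (by split_ifs <;> norm_num)
    (Finset.prod_nonneg fun _ _ => stepProb_nonneg hω _ _)

lemma IsQuenchedLaw.measure_prefixCyl_eq_add (h : IsQuenchedLaw ω μ) (k : ℕ) (z : ℕ → ℤ) :
    μ (prefixCyl k z) = μ (prefixCyl k z ∩ {X | X (k + 1) = z k + 1})
      + μ (prefixCyl k z ∩ {X | X (k + 1) = z k - 1}) := by
  have hdisj : Disjoint (prefixCyl k z ∩ {X | X (k + 1) = z k + 1})
      (prefixCyl k z ∩ {X | X (k + 1) = z k - 1}) :=
    Set.disjoint_left.2 fun X h₁ h₂ => by have := h₁.2.symm.trans h₂.2; omega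
  rw [← measure_union hdisj ((measurableSet_prefixCyl k z).inter (by measurability)),
    ← Set.inter_union_distrib_left, measure_inter_conull']
  refine measure_mono_null ?_ h.measure_compl_nearestWalks
  rintro X ⟨hXz, hX⟩ hXw
  exact hX (by rcases hXw.2 k with h' | h' <;> simp [h', hXz k le_rfl])

lemma IsQuenchedLaw.measure_prefixCyl_succ (h : IsQuenchedLaw ω μ) (hω : ∀ i, ω i ∈ Set.Icc 0 1)
    (k : ℕ) (z : ℕ → ℤ) :
    μ (prefixCyl (k + 1) z)
      = ENNReal.ofReal (stepProb ω (z k) (z (k + 1))) * μ (prefixCyl k z) := by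
  have := h.prob
  have hup : μ (prefixCyl k z ∩ {X | X (k + 1) = z k + 1})
      = ENNReal.ofReal (ω (z k)) * μ (prefixCyl k z) := h.step k z
  rw [prefixCyl_succ]
  by_cases hz₁ : z (k + 1) = z k + 1
  · rw [hz₁, hup, stepProb, if_pos rfl]
  by_cases hz₂ : z (k + 1) = z k - 1
  · have hsum := h.measure_prefixCyl_eq_add k z
    rw [hup] at hsum
    have hdown : μ (prefixCyl k z ∩ {X | X (k + 1) = z k - 1})
        = μ (prefixCyl k z) - ENNReal.ofReal (ω (z k)) * μ (prefixCyl k z) :=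
      ENNReal.eq_sub_of_add_eq (by finiteness) (by rw [add_comm, ← hsum])
    rw [hz₂, hdown, stepProb, if_neg (by omega), if_pos rfl, ENNReal.ofReal_sub _ (hω _).1,
      ENNReal.ofReal_one, ENNReal.sub_mul fun _ _ => measure_ne_top μ _, one_mul]
  · rw [stepProb, if_neg hz₁, if_neg hz₂, ENNReal.ofReal_zero, zero_mul]
    refine measure_mono_null ?_ h.measure_compl_nearestWalks
    rintro X ⟨hXz, hX⟩ hXw
    have := hXz k le_rfl
    rcases hXw.2 k with h' | h' <;> simp only [Set.mem_ofPred_eq] at hX <;> omega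

lemma IsQuenchedLaw.measure_prefixCyl (h : IsQuenchedLaw ω μ) (hω : ∀ i, ω i ∈ Set.Icc 0 1)
    (k : ℕ) (z : ℕ → ℤ) : μ (prefixCyl k z) = ENNReal.ofReal (pathWeight ω k z) := by
  induction k with
  | zero =>
    rw [prefixCyl_zero]
    by_cases hz : z 0 = 0
    · simpa [pathWeight, hz] using h.start
    · simp only [pathWeight, hz, if_false, zero_mul, ENNReal.ofReal_zero]
      refine measure_mono_null ?_ h.measure_compl_nearestWalks
      intro X hX hXw
      exact hz (hX ▸ hXw.1)
  | succ k ih =>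
    rw [h.measure_prefixCyl_succ hω, ih, ← ENNReal.ofReal_mul (stepProb_nonneg hω _ _),
      pathWeight_succ, mul_comm]

end Cylinders

def concatPath (k : ℕ) (z w : ℕ → ℤ) : ℕ → ℤ := fun j => if j ≤ k then z j else w (j - k) + z k

lemma prefixCyl_inter_shiftTraj_preimage (k m : ℕ) (z w : ℕ → ℤ) (hw : w 0 = 0) :
    prefixCyl k z ∩ shiftTraj k (z k) ⁻¹' prefixCyl m w
      = prefixCyl (k + m) (concatPath k z w) := by
  ext X
  simp only [prefixCyl, concatPath, Set.mem_inter_iff, Set.mem_preimage, Set.mem_ofPred_eq,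
    shiftTraj]
  constructor
  · rintro ⟨h₁, h₂⟩ j hj
    split_ifs with hjk
    · exact h₁ j hjk
    · have := h₂ (j - k) (by omega)
      rw [Nat.sub_add_cancel (by omega)] at this
      omega
  · intro hX
    have hXk : X k = z k := by simpa using hX k (by omega)
    refine ⟨fun j hj => by simpa [hj] using hX j (by omega), fun u hu => ?_⟩
    rcases Nat.eq_zero_or_pos u with rfl | hu0
    · simp [hXk, hw]
    · have := hX (u + k) (by omega)
      rw [if_neg (by omega), Nat.add_sub_cancel] at this
      omega

lemma pathWeight_concatPath (ω : Env) (k m : ℕ) (z w : ℕ → ℤ) (hw : w 0 = 0) :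
    pathWeight ω (k + m) (concatPath k z w)
      = pathWeight ω k z * pathWeight (shiftEnv (z k) ω) m w := by
  have hval : ∀ i, concatPath k z w (k + i) = w i + z k := by
    intro i
    rcases Nat.eq_zero_or_pos i with rfl | hi
    · simp [concatPath, hw]
    · simp only [concatPath, if_neg (show ¬k + i ≤ k by omega), Nat.add_sub_cancel_left]
  have hfirst : ∀ j ∈ Finset.range k, stepProb ω (concatPath k z w j) (concatPath k z w (j + 1))
      = stepProb ω (z j) (z (j + 1)) := by
    intro j hj
    rw [Finset.mem_range] at hj
    simp only [concatPath, if_pos hj.le, if_pos (show j + 1 ≤ k by omega)]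
  have hsecond : ∀ i ∈ Finset.range m,
      stepProb ω (concatPath k z w (k + i)) (concatPath k z w (k + i + 1))
        = stepProb (shiftEnv (z k) ω) (w i) (w (i + 1)) := by
    intro i _
    rw [hval i, show k + i + 1 = k + (i + 1) by ring, hval (i + 1)]
    simp only [stepProb, shiftEnv_apply]
    have e₁ : w (i + 1) + z k = w i + z k + 1 ↔ w (i + 1) = w i + 1 := by omega
    have e₂ : w (i + 1) + z k = w i + z k - 1 ↔ w (i + 1) = w i - 1 := by omega
    simp only [e₁, e₂]
  unfold pathWeight
  rw [Finset.prod_range_add, Finset.prod_congr rfl hfirst, Finset.prod_congr rfl hsecond]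
  simp [concatPath, hw]

lemma IsQuenchedLaw.measure_prefixCyl_inter_shiftTraj_preimage {ω : Env} {μ ν : Measure Traj}
    (hμ : IsQuenchedLaw ω μ) (hω : ∀ i, ω i ∈ Set.Icc 0 1) (k : ℕ) (z : ℕ → ℤ)
    (hν : IsQuenchedLaw (shiftEnv (z k) ω) ν) {E : Set Traj} (hE : MeasurableSet E) :
    μ (prefixCyl k z ∩ shiftTraj k (z k) ⁻¹' E) = μ (prefixCyl k z) * ν E := by
  have := hμ.prob
  have := hν.prob
  let μ' : Measure Traj := (μ.restrict (prefixCyl k z)).map (shiftTraj k (z k))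
  have hμ' : ∀ E', MeasurableSet E' → μ' E' = μ (prefixCyl k z ∩ shiftTraj k (z k) ⁻¹' E') :=
    fun E' hE' => by
      rw [Measure.map_apply (measurable_shiftTraj _ _) hE',
        Measure.restrict_apply (measurable_shiftTraj _ _ hE'), Set.inter_comm]
  have : IsFiniteMeasure μ' := by unfold μ'; infer_instance
  suffices μ' = μ (prefixCyl k z) • ν by rw [← hμ' E hE, this, Measure.smul_apply, smul_eq_mul]
  refine ext_of_generate_finite prefixCyls generateFrom_prefixCyls isPiSystem_prefixCyls ?_ ?_
  · rintro _ ⟨m, w, rfl⟩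
    rw [hμ' _ (measurableSet_prefixCyl m w), Measure.smul_apply, smul_eq_mul]
    by_cases hw : w 0 = 0
    · rw [prefixCyl_inter_shiftTraj_preimage k m z w hw, hμ.measure_prefixCyl hω,
        hμ.measure_prefixCyl hω, hν.measure_prefixCyl (fun i => hω _),
        pathWeight_concatPath ω k m z w hw, ENNReal.ofReal_mul (pathWeight_nonneg hω k z)]
    · have hempty : prefixCyl k z ∩ shiftTraj k (z k) ⁻¹' prefixCyl m w = ∅ :=
        Set.eq_empty_of_forall_notMem fun X ⟨h₁, h₂⟩ => hw (by
          have := h₂ 0 (Nat.zero_le m)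
          simp only [shiftTraj, zero_add, h₁ k le_rfl, sub_self] at this
          exact this.symm)
      rw [hempty, measure_empty, hν.measure_prefixCyl (fun i => hω _)]
      simp [pathWeight, hw]
  · rw [hμ' _ MeasurableSet.univ, Measure.smul_apply, Set.preimage_univ, Set.inter_univ,
      measure_univ, smul_eq_mul, mul_one]

lemma prefixCyl_one (d : ℤ) :
    prefixCyl 1 (fun j => if j = 0 then 0 else d) = {X : Traj | X 0 = 0 ∧ X 1 = d} := by
  rw [prefixCyl_succ, prefixCyl_zero]
  rfl

lemma IsQuenchedLaw.measure_eq_first_step {ω : Env} {μ νu νd : Measure Traj}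
    (hμ : IsQuenchedLaw ω μ) (hω : ∀ i, ω i ∈ Set.Icc 0 1)
    (hνu : IsQuenchedLaw (shiftEnv 1 ω) νu) (hνd : IsQuenchedLaw (shiftEnv (-1) ω) νd)
    {E Eu Ed : Set Traj} (hE : MeasurableSet E) (hEu : MeasurableSet Eu)
    (hEd : MeasurableSet Ed) (hu : ∀ X : Traj, X 0 = 0 → (X ∈ E ↔ shiftTraj 1 1 X ∈ Eu))
    (hd : ∀ X : Traj, X 0 = 0 → (X ∈ E ↔ shiftTraj 1 (-1) X ∈ Ed)) :
    μ E = ENNReal.ofReal (ω 0) * νu Eu + ENNReal.ofReal (1 - ω 0) * νd Ed := by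
  have hstep : ∀ (d : ℤ) (ν : Measure Traj) (E' : Set Traj), IsQuenchedLaw (shiftEnv d ω) ν →
      MeasurableSet E' → (∀ X : Traj, X 0 = 0 → (X ∈ E ↔ shiftTraj 1 d X ∈ E')) →
      μ (E ∩ {X | X 0 = 0 ∧ X 1 = d}) = ENNReal.ofReal (stepProb ω 0 d) * ν E' := by
    intro d ν E' hν hE' hEE'
    have hset : E ∩ {X | X 0 = 0 ∧ X 1 = d} = prefixCyl 1 (fun j => if j = 0 then 0 else d)
        ∩ shiftTraj 1 d ⁻¹' E' := by
      rw [prefixCyl_one]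
      ext X
      simp only [Set.mem_inter_iff, Set.mem_ofPred_eq, Set.mem_preimage]
      exact ⟨fun ⟨hX, h0, h1⟩ => ⟨⟨h0, h1⟩, (hEE' X h0).1 hX⟩,
        fun ⟨⟨h0, h1⟩, hX⟩ => ⟨(hEE' X h0).2 hX, h0, h1⟩⟩
    have hM := hμ.measure_prefixCyl_inter_shiftTraj_preimage hω 1
      (fun j => if j = 0 then 0 else d) hν hE'
    simp only [one_ne_zero, if_false] at hM
    rw [hset, hM, hμ.measure_prefixCyl hω]
    simp [pathWeight]
  have hsplit : μ E = μ (E ∩ {X | X 0 = 0 ∧ X 1 = 1}) + μ (E ∩ {X | X 0 = 0 ∧ X 1 = -1}) := by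
    have hdisj : Disjoint (E ∩ {X | X 0 = 0 ∧ X 1 = 1}) (E ∩ {X | X 0 = 0 ∧ X 1 = -1}) :=
      Set.disjoint_left.2 fun X h₁ h₂ => by have := h₁.2.2.symm.trans h₂.2.2; omega
    rw [← measure_union hdisj (hE.inter (by measurability)), ← Set.inter_union_distrib_left,
      measure_inter_conull']
    refine measure_mono_null ?_ hμ.measure_compl_nearestWalks
    rintro X ⟨-, hX⟩ hXw
    simp only [← Set.ofPred_or, Set.mem_ofPred_eq, hXw.1, true_and] at hX
    rcases hXw.2 0 with h | h <;> simp [hXw.1] at h <;> simp [h] at hX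
  rw [hsplit, hstep 1 νu Eu hνu hEu hu, hstep (-1) νd Ed hνd hEd hd]
  simp [stepProb]

/-! ### Gambler's ruin -/

/-- Solutions of the harmonic recursion of a birth-death chain, in terms of the scale function. -/
lemma eq_add_mul_sum_prod_of_harmonic {p F : ℕ → ℝ} (hp : ∀ j, 0 < p j) {L : ℕ}
    (hF : ∀ j, 0 < j → j < L → F j = p j * F (j + 1) + (1 - p j) * F (j - 1)) :
    ∀ j ≤ L, F j = F 0 + (F 1 - F 0) *
      ∑ m ∈ Finset.range j, ∏ i ∈ Finset.range m, (1 - p (i + 1)) / p (i + 1) := by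
  have hdiff : ∀ j, j + 1 ≤ L →
      F (j + 1) - F j = (F 1 - F 0) * ∏ i ∈ Finset.range j, (1 - p (i + 1)) / p (i + 1) := by
    intro j
    induction j with
    | zero => simp
    | succ j ih =>
      intro hj
      have hrec := hF (j + 1) (by omega) (by omega)
      simp only [Nat.add_sub_cancel] at hrec
      rw [Finset.prod_range_succ, ← mul_assoc, ← ih (by omega), mul_div_assoc',
        eq_div_iff (hp _).ne']
      linear_combination -hrec
  intro j hj
  induction j with
  | zero => simp
  | succ j ih =>
    rw [Finset.sum_range_succ, mul_add, ← add_assoc, ← ih (by omega), ← hdiff j hj]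
    ring

/-- The probability of `G b a` for the walk started at `x`, which is the walk started at `0` in
the environment seen from `x`. -/
def probFrom (Pq : Env → Measure Traj) (ω : Env) (G : ℤ → ℤ → Set Traj) (b a x : ℤ) : ℝ :=
  (Pq (shiftEnv x ω) (G (b - x) (a - x))).toReal

/-- Events of a path from `0` relative to two sites `c, d ≠ 0`, which after the first step
become the same events of the remaining path relative to the translated sites. -/
def FirstStepInvariant (G : ℤ → ℤ → Set Traj) : Prop :=
  ∀ (c d e : ℤ) (X : Traj), c ≠ 0 → d ≠ 0 → X 0 = 0 →
    (X ∈ G c d ↔ shiftTraj 1 e X ∈ G (c - e) (d - e))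

lemma firstStepInvariant_hitsBefore : FirstStepInvariant hitsBefore := by
  intro c d e X hc hd h0
  simp only [hitsBefore, Set.mem_ofPred_eq, shiftTraj]
  constructor
  · rintro ⟨t, htc, hall⟩
    obtain ⟨t, rfl⟩ : ∃ t', t = t' + 1 := ⟨t - 1, by rcases t with _ | t <;> simp_all⟩
    exact ⟨t, by omega, fun u hu => by have := hall (u + 1) (by omega); omega⟩
  · rintro ⟨t, htc, hall⟩
    refine ⟨t + 1, by omega, fun u hu => ?_⟩
    rcases u with _ | u
    · omega
    · have := hall u (by omega); omega

lemma firstStepInvariant_avoids : FirstStepInvariant avoids := by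
  intro c d e X hc hd h0
  simp only [avoids, Set.mem_ofPred_eq, shiftTraj]
  refine ⟨fun h t => by have := h (t + 1); omega, fun h t => ?_⟩
  rcases t with _ | t
  · omega
  · have := h t; omega

namespace GoodEnv

variable {Pq : Env → Measure Traj} {ω : Env} {G : ℤ → ℤ → Set Traj}

lemma probFrom_eq (hg : GoodEnv Pq ω) (hGm : ∀ c d, MeasurableSet (G c d))
    (hG : FirstStepInvariant G) {a b x : ℤ} (hax : a < x) (hxb : x < b) :
    probFrom Pq ω G b a x
      = ω x * probFrom Pq ω G b a (x + 1) + (1 - ω x) * probFrom Pq ω G b a (x - 1) := by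
  have hx := hg.shift x
  have hνu : IsQuenchedLaw (shiftEnv 1 (shiftEnv x ω)) (Pq (shiftEnv (x + 1) ω)) := by
    rw [shiftEnv_shiftEnv]; exact hg.law (x + 1)
  have hνd : IsQuenchedLaw (shiftEnv (-1) (shiftEnv x ω)) (Pq (shiftEnv (x - 1) ω)) := by
    rw [shiftEnv_shiftEnv, ← sub_eq_add_neg]; exact hg.law (x - 1)
  have := (hg.law (x + 1)).prob
  have := (hg.law (x - 1)).prob
  unfold probFrom
  rw [hx.isQuenchedLaw.measure_eq_first_step hx.mem_Icc hνu hνd (hGm _ _) (hGm _ _) (hGm _ _)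
      (fun X h0 => hG _ _ 1 X (by omega) (by omega) h0)
      (fun X h0 => hG _ _ (-1) X (by omega) (by omega) h0),
    ENNReal.toReal_add (by finiteness) (by finiteness), ENNReal.toReal_mul, ENNReal.toReal_mul]
  simp only [shiftEnv_apply, zero_add, ENNReal.toReal_ofReal (hg.pos x).le,
    ENNReal.toReal_ofReal (sub_nonneg.2 (hg.lt_one x).le), sub_sub, sub_neg_eq_add]
  rw [show b - x + 1 = b - (x - 1) by ring, show a - x + 1 = a - (x - 1) by ring]

lemma probFrom_eq_alphaSum (hg : GoodEnv Pq ω) (hGm : ∀ c d, MeasurableSet (G c d))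
    (hG : FirstStepInvariant G) {a b : ℤ} {j : ℕ} (hj : a + j ≤ b) :
    probFrom Pq ω G b a (a + j) = probFrom Pq ω G b a a
      + (probFrom Pq ω G b a (a + 1) - probFrom Pq ω G b a a) * alphaSum ω a j := by
  have key := eq_add_mul_sum_prod_of_harmonic (p := fun j : ℕ => ω (a + j))
    (F := fun j : ℕ => probFrom Pq ω G b a (a + j)) (L := (b - a).toNat) (fun j => hg.pos _)
    (fun j hj hjL => by
      have := hg.probFrom_eq hGm hG (a := a) (b := b) (x := a + j) (by omega) (by omega)
      simpa [Nat.cast_sub (Nat.one_le_iff_ne_zero.2 hj.ne'), add_sub_assoc, add_assoc] using this)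
    j (by omega)
  simp only [Nat.cast_zero, add_zero, Nat.cast_one] at key
  rw [key]
  congr 2
  refine Finset.sum_congr rfl fun m _ => Finset.prod_congr rfl fun i _ => ?_
  simp only [alpha, Nat.cast_add, Nat.cast_one]
  ring_nf

end GoodEnv

namespace IsQuenchedLaw

variable {ω : Env} {μ : Measure Traj}

lemma measure_eq_zero_of_forall_ne (h : IsQuenchedLaw ω μ) {A : Set Traj}
    (hA : ∀ X ∈ A, X 0 ≠ 0) : μ A = 0 := by
  refine measure_mono_null ?_ h.measure_compl_nearestWalks
  exact fun X hX hXw => hA X hX hXw.1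

lemma measure_eq_one_of_forall_eq (h : IsQuenchedLaw ω μ) {A : Set Traj}
    (hA : ∀ X : Traj, X 0 = 0 → X ∈ A) : μ A = 1 :=
  have := h.prob
  le_antisymm prob_le_one (h.start ▸ measure_mono fun X hX => hA X hX)

end IsQuenchedLaw

namespace GoodEnv

variable {Pq : Env → Measure Traj} {ω : Env}

/-- The scale-function formula at the start `0` and at the absorbing site `m`. -/
lemma probFrom_scale_eqs {G : ℤ → ℤ → Set Traj} (hg : GoodEnv Pq ω)
    (hGm : ∀ c d, MeasurableSet (G c d)) (hG : FirstStepInvariant G) (n m : ℕ) :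
    (Pq ω (G m (-n))).toReal = probFrom Pq ω G m (-n) (-n)
        + (probFrom Pq ω G m (-n) (-n + 1) - probFrom Pq ω G m (-n) (-n)) * alphaSum ω (-n) n ∧
      (Pq (shiftEnv m ω) (G 0 (-n - m))).toReal = probFrom Pq ω G m (-n) (-n)
        + (probFrom Pq ω G m (-n) (-n + 1) - probFrom Pq ω G m (-n) (-n))
          * alphaSum ω (-n) (n + m) := by
  constructor
  · simpa [probFrom, shiftEnv_zero] using
      hg.probFrom_eq_alphaSum hGm hG (a := -n) (b := m) (j := n) (by omega)
  · simpa [probFrom] using hg.probFrom_eq_alphaSum hGm hG (a := -n) (b := m) (j := n + m) (by omega)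

lemma measure_avoids (hg : GoodEnv Pq ω) {n m : ℕ} (hn : 0 < n) (hm : 0 < m) :
    Pq ω (avoids m (-n)) = 0 := by
  have := hg.isProbabilityMeasure
  have hbot : probFrom Pq ω avoids m (-n) (-n) = 0 := by
    simp only [probFrom, sub_self]
    rw [(hg.shift _).isQuenchedLaw.measure_eq_zero_of_forall_ne fun X hX => (hX 0).2,
      ENNReal.toReal_zero]
  obtain ⟨h₀, hm'⟩ := hg.probFrom_scale_eqs measurableSet_avoids firstStepInvariant_avoids n m
  rw [(hg.shift _).isQuenchedLaw.measure_eq_zero_of_forall_ne fun X hX => (hX 0).1,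
    ENNReal.toReal_zero, hbot, zero_add, sub_zero] at hm'
  have hS := one_le_alphaSum hg.alpha_pos (-n) (show 0 < n + m by omega)
  have hstep : probFrom Pq ω avoids m (-n) (-n + 1) = 0 := by
    rcases mul_eq_zero.1 hm'.symm with h | h
    · exact h
    · linarith
  rw [hbot, hstep, zero_add, sub_zero, zero_mul] at h₀
  exact (ENNReal.toReal_eq_zero_iff _).1 h₀ |>.resolve_right (measure_ne_top _ _)

lemma toReal_measure_hitsBefore (hg : GoodEnv Pq ω) {n m : ℕ} (hn : 0 < n) (hm : 0 < m) :
    (Pq ω (hitsBefore m (-n))).toReal = alphaSum ω (-n) n / alphaSum ω (-n) (n + m) := by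
  have hbot : probFrom Pq ω hitsBefore m (-n) (-n) = 0 := by
    simp only [probFrom, sub_self]
    rw [(hg.shift _).isQuenchedLaw.measure_eq_zero_of_forall_ne (A := hitsBefore _ 0)
      fun X ⟨t, _, hX⟩ => hX 0 (Nat.zero_le t), ENNReal.toReal_zero]
  obtain ⟨h₀, hm'⟩ :=
    hg.probFrom_scale_eqs measurableSet_hitsBefore firstStepInvariant_hitsBefore n m
  have hstart : ∀ X : Traj, X 0 = 0 → X ∈ hitsBefore 0 (-n - m) := fun X h0 =>
    ⟨0, h0, fun u hu => by rw [Nat.le_zero.1 hu, h0]; omega⟩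
  rw [(hg.shift _).isQuenchedLaw.measure_eq_one_of_forall_eq hstart, ENNReal.toReal_one, hbot,
    zero_add, sub_zero] at hm'
  have hS := one_le_alphaSum hg.alpha_pos (-n) (show 0 < n + m by omega)
  rw [h₀, hbot, zero_add, sub_zero, eq_div_iff (by linarith)]
  linear_combination (alphaSum ω (-n) n) * hm'.symm

lemma toReal_measure_hitsBefore_neg (hg : GoodEnv Pq ω) {n m : ℕ} (hn : 0 < n) (hm : 0 < m) :
    (Pq ω (hitsBefore (-n) m)).toReal = 1 - alphaSum ω (-n) n / alphaSum ω (-n) (n + m) := by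
  have := hg.isProbabilityMeasure
  have hdisj : Disjoint (hitsBefore (m : ℤ) (-n)) (hitsBefore (-n) m) := by
    refine Set.disjoint_left.2 fun X ⟨t, htb, hta⟩ ⟨t', hta', htb'⟩ => ?_
    rcases le_total t t' with h | h
    · exact htb' t h htb
    · exact hta t' h hta'
  have hcover : ∀ X : Traj, X 0 = 0 →
      X ∈ (hitsBefore (m : ℤ) (-n) ∪ hitsBefore (-n) m) ∪ avoids m (-n) := by
    intro X _
    simp only [hitsBefore, avoids, Set.mem_union, Set.mem_ofPred_eq]
    by_cases hex : ∃ t, X t = -n ∨ X t = m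
    · have hmin := fun u => Nat.find_min (m := u) hex
      rcases Nat.find_spec hex with h | h
      · refine Or.inl (Or.inr ⟨_, h, fun u hu hum => ?_⟩)
        rcases hu.lt_or_eq with hu | rfl
        · exact hmin u hu (Or.inr hum)
        · omega
      · refine Or.inl (Or.inl ⟨_, h, fun u hu hun => ?_⟩)
        rcases hu.lt_or_eq with hu | rfl
        · exact hmin u hu (Or.inl hun)
        · omega
    · push Not at hex
      exact Or.inr fun t => ⟨(hex t).2, (hex t).1⟩
  have hone := hg.isQuenchedLaw.measure_eq_one_of_forall_eq hcover
  rw [measure_congr (union_ae_eq_left_of_ae_eq_empty (ae_eq_empty.2 (hg.measure_avoids hn hm))),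
    measure_union hdisj (measurableSet_hitsBefore _ _)] at hone
  have htr := congrArg ENNReal.toReal hone
  rw [ENNReal.toReal_add (by finiteness) (by finiteness), ENNReal.toReal_one,
    hg.toReal_measure_hitsBefore hn hm] at htr
  linarith

lemma toReal_measure_hitsBefore_neg_le (hg : GoodEnv Pq ω) {n m : ℕ} (hn : 0 < n) (hm : 0 < m) :
    (Pq ω (hitsBefore (-n) m)).toReal ≤ alphaProd ω (-n) n * alphaSeries ω := by
  have hS := one_le_alphaSum hg.alpha_pos (-n) (show 0 < n + m by omega)
  have htail : alphaSum ω (-n) (n + m) - alphaSum ω (-n) n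
      = alphaProd ω (-n) n * ∑ r ∈ Finset.range m, alphaProd ω 0 r := by
    simp only [alphaSum, Finset.sum_range_add, add_sub_cancel_left, Finset.mul_sum, alphaProd_add,
      neg_add_cancel]
  calc (Pq ω (hitsBefore (-n) m)).toReal
      = (alphaSum ω (-n) (n + m) - alphaSum ω (-n) n) / alphaSum ω (-n) (n + m) := by
        rw [hg.toReal_measure_hitsBefore_neg hn hm]
        field_simp
    _ ≤ alphaSum ω (-n) (n + m) - alphaSum ω (-n) n := by
        refine div_le_self ?_ hS
        rw [htail]
        exact mul_nonneg (alphaProd_pos hg.alpha_pos _ _).le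
          (Finset.sum_nonneg fun r _ => (alphaProd_pos hg.alpha_pos _ _).le)
    _ ≤ alphaProd ω (-n) n * alphaSeries ω := by
        rw [htail]
        exact mul_le_mul_of_nonneg_left (Summable.sum_le_tsum _
          (fun r _ => (alphaProd_pos hg.alpha_pos _ _).le) (hg.summable 0))
          (alphaProd_pos hg.alpha_pos _ _).le

lemma ae_mem_hits (hg : GoodEnv Pq ω) (m : ℕ) : ∀ᵐ X ∂Pq ω, X ∈ hits m := by
  change Pq ω (hits m)ᶜ = 0
  have := hg.isProbabilityMeasure
  rcases Nat.eq_zero_or_pos m with rfl | hm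
  · exact hg.isQuenchedLaw.measure_eq_zero_of_forall_ne fun X hX h0 => hX ⟨0, h0⟩
  -- the walk can only miss `m` by going below `-(k + 1)` first, for every `k`
  have hbound : ∀ k : ℕ, (Pq ω (hits m)ᶜ).toReal
      ≤ alphaProd ω (-↑(k + 1)) (k + 1) * alphaSeries ω := by
    intro k
    refine le_trans (ENNReal.toReal_mono (by finiteness) ?_)
      (hg.toReal_measure_hitsBefore_neg_le k.succ_pos hm)
    calc Pq ω (hits m)ᶜ ≤ Pq ω (hitsBefore (-↑(k + 1)) m ∪ avoids m (-↑(k + 1))) := by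
          refine measure_mono fun X hX => ?_
          by_cases hex : ∃ t, X t = -↑(k + 1)
          · obtain ⟨t, ht⟩ := hex
            exact Or.inl ⟨t, ht, fun u _ hu => hX ⟨u, hu⟩⟩
          · push Not at hex
            exact Or.inr fun t => ⟨fun h => hX ⟨t, h⟩, hex t⟩
      _ ≤ Pq ω (hitsBefore (-↑(k + 1)) m) :=
          (measure_union_le _ _).trans (by rw [hg.measure_avoids k.succ_pos hm, add_zero])
  have hlim :
      Tendsto (fun k : ℕ => alphaProd ω (-↑(k + 1)) (k + 1) * alphaSeries ω) atTop (𝓝 0) := by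
    simpa using ((hg.tendsto_left 0).comp (tendsto_add_atTop_nat 1)).mul_const (alphaSeries ω)
  exact (ENNReal.toReal_eq_zero_iff _).1
    (le_antisymm (ge_of_tendsto' hlim hbound) ENNReal.toReal_nonneg) |>.resolve_right
    (by finiteness)

lemma measure_hits_neg_le (hg : GoodEnv Pq ω) {n : ℕ} (hn : 0 < n) :
    Pq ω (hits (-n)) ≤ ENNReal.ofReal (alphaProd ω (-n) n * alphaSeries ω) := by
  have := hg.isProbabilityMeasure
  have hunion : hits (-n) = ⋃ t : ℕ, {X : Traj | ∃ u ≤ t, X u = -n} := by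
    ext X
    simp only [hits, Set.mem_iUnion, Set.mem_ofPred_eq]
    exact ⟨fun ⟨u, hu⟩ => ⟨u, u, le_rfl, hu⟩, fun ⟨_, u, _, hu⟩ => ⟨u, hu⟩⟩
  have hmono : Monotone fun t : ℕ => {X : Traj | ∃ u ≤ t, X u = -n} :=
    fun t t' h X ⟨u, hu, hX⟩ => ⟨u, hu.trans h, hX⟩
  rw [hunion, hmono.measure_iUnion]
  refine iSup_le fun t => ?_
  -- a nearest-neighbour walk from `0` cannot reach `t + 1` by time `t`
  have hsub : ∀ᵐ X ∂Pq ω, X ∈ {X : Traj | ∃ u ≤ t, X u = -n} → X ∈ hitsBefore (-n) ↑(t + 1) := by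
    filter_upwards [hg.isQuenchedLaw.ae_mem_nearestWalks] with X hXw ⟨u, hu, hX⟩
    exact ⟨u, hX, fun v hv h => by have := le_of_mem_nearestWalks hXw v; push_cast at h; omega⟩
  refine (measure_mono_ae hsub).trans ?_
  rw [ENNReal.le_ofReal_iff_toReal_le (by finiteness)
    (mul_nonneg (alphaProd_pos hg.alpha_pos _ _).le (alphaSeries_nonneg hg.alpha_pos))]
  exact hg.toReal_measure_hitsBefore_neg_le hn t.succ_pos

end GoodEnv

/-! ### The strong Markov property at the hitting time -/

lemma IsQuenchedLaw.measure_pathPrefix_preimage_inter {ω : Env} {μ ν : Measure Traj}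
    (hμ : IsQuenchedLaw ω μ) (hω : ∀ i, ω i ∈ Set.Icc 0 1) {k : ℕ} {c : ℤ}
    (hν : IsQuenchedLaw (shiftEnv c ω) ν) {S : Set (Fin (k + 1) → ℤ)}
    (hS : ∀ v ∈ S, v (Fin.last k) = c) {E : Set Traj} (hE : MeasurableSet E) :
    μ (pathPrefix k ⁻¹' S ∩ shiftTraj k c ⁻¹' E) = μ (pathPrefix k ⁻¹' S) * ν E := by
  have hcount := S.to_countable
  have hdisj : S.PairwiseDisjoint fun v => pathPrefix k ⁻¹' {v} :=
    fun v _ w _ hvw => Set.disjoint_left.2 fun X hv hw => hvw (hv.symm.trans hw)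
  rw [← Set.biUnion_preimage_singleton, Set.iUnion₂_inter,
    measure_biUnion hcount (hdisj.mono fun v => Set.inter_subset_left)
      fun v _ => (measurable_pathPrefix k (measurableSet_singleton v)).inter
        (measurable_shiftTraj k c hE),
    measure_biUnion hcount hdisj fun v _ => measurable_pathPrefix k (measurableSet_singleton v),
    ← ENNReal.tsum_mul_right]
  refine tsum_congr fun ⟨v, hv⟩ => ?_
  set z : ℕ → ℤ := fun j => if h : j < k + 1 then v ⟨j, h⟩ else 0
  have hzk : z k = c := by
    simp only [z, Nat.lt_succ_self, dif_pos]
    exact hS v hv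
  have h := hμ.measure_prefixCyl_inter_shiftTraj_preimage hω k z (hzk ▸ hν) hE
  rw [hzk] at h
  rw [pathPrefix_preimage_singleton, h]

lemma hitTime_eq_iff {X : Traj} {N k : ℕ} (hX : X ∈ hits N) :
    hitTime X N = k ↔ X k = N ∧ ∀ j < k, X j ≠ N := by
  have hmem : X (hitTime X N) = N := Nat.sInf_mem (s := {t : ℕ | X t = N}) hX
  constructor
  · rintro rfl
    exact ⟨hmem, fun j hj hXj => not_le.2 hj (Nat.sInf_le hXj)⟩
  · rintro ⟨h₁, h₂⟩
    exact le_antisymm (Nat.sInf_le h₁) (not_lt.1 fun h => h₂ _ h hmem)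

def firstHitPrefixes (N k : ℕ) : Set (Fin (k + 1) → ℤ) :=
  {v | v (Fin.last k) = N ∧ ∀ j : Fin (k + 1), (j : ℕ) < k → v j ≠ N}

lemma mem_pathPrefix_preimage_firstHitPrefixes {X : Traj} {N k : ℕ} :
    X ∈ pathPrefix k ⁻¹' firstHitPrefixes N k ↔ X k = N ∧ ∀ j < k, X j ≠ N :=
  ⟨fun ⟨h₁, h₂⟩ => ⟨h₁, fun j hj => h₂ ⟨j, by omega⟩ hj⟩,
    fun ⟨h₁, h₂⟩ => ⟨h₁, fun j hj => h₂ j hj⟩⟩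

lemma GoodEnv.measure_le_of_shiftTraj_hitTime_mem {Pq : Env → Measure Traj} {ω : Env}
    (hg : GoodEnv Pq ω) (N : ℕ) {E : Set Traj} (hE : MeasurableSet E) {A : Set Traj}
    (hA : ∀ X ∈ A, X ∈ nearestWalks → X ∈ hits N → shiftTraj (hitTime X N) N X ∈ E) :
    Pq ω A ≤ Pq (shiftEnv N ω) E := by
  have := hg.isProbabilityMeasure
  let H : ℕ → Set Traj := fun k => pathPrefix k ⁻¹' firstHitPrefixes N k
  have hHm : ∀ k, MeasurableSet (H k) :=
    fun k => measurable_pathPrefix k (Set.to_countable _).measurableSet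
  have hHdisj : Pairwise (Function.onFun Disjoint H) := by
    intro k k' hkk'
    refine Set.disjoint_left.2 fun X hk hk' => hkk' ?_
    rw [mem_pathPrefix_preimage_firstHitPrefixes] at hk hk'
    rcases lt_trichotomy k k' with h | h | h
    · exact absurd hk.1 (hk'.2 k h)
    · exact h
    · exact absurd hk'.1 (hk.2 k' h)
  have hcover : ∀ᵐ X ∂Pq ω, X ∈ A → X ∈ ⋃ k, H k ∩ shiftTraj k N ⁻¹' E := by
    filter_upwards [hg.isQuenchedLaw.ae_mem_nearestWalks, hg.ae_mem_hits N] with X hXw hXN hXA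
    exact Set.mem_iUnion.2 ⟨hitTime X N,
      mem_pathPrefix_preimage_firstHitPrefixes.2 ((hitTime_eq_iff hXN).1 rfl), hA X hXA hXw hXN⟩
  calc Pq ω A ≤ Pq ω (⋃ k, H k ∩ shiftTraj k N ⁻¹' E) := measure_mono_ae hcover
    _ ≤ ∑' k, Pq ω (H k ∩ shiftTraj k N ⁻¹' E) := measure_iUnion_le _
    _ = ∑' k, Pq ω (H k) * Pq (shiftEnv N ω) E := tsum_congr fun k =>
        hg.isQuenchedLaw.measure_pathPrefix_preimage_inter hg.mem_Icc (hg.law N)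
          (fun v hv => hv.1) hE
    _ = Pq ω (⋃ k, H k) * Pq (shiftEnv N ω) E := by
        rw [ENNReal.tsum_mul_right, measure_iUnion hHdisj hHm]
    _ ≤ Pq (shiftEnv N ω) E := mul_le_of_le_one_left zero_le prob_le_one

/-! ### Transience -/

namespace GoodEnv

variable {Pq : Env → Measure Traj} {ω : Env}

lemma measure_infinite_le (hg : GoodEnv Pq ω) (c : ℤ) :
    Pq ω {X | {t | X t ≤ c}.Infinite} = 0 := by
  -- after reaching `N = c + n`, the walk would have to come back down by `n`
  have hbound : ∀ n : ℕ, 0 < n → 0 ≤ c + n →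
      Pq ω {X | {t | X t ≤ c}.Infinite} ≤ ENNReal.ofReal (∑' k, alphaProd ω c (k + n)) := by
    intro n hn hcn
    obtain ⟨N, hN⟩ : ∃ N : ℕ, (N : ℤ) = c + n := ⟨(c + n).toNat, Int.toNat_of_nonneg hcn⟩
    have hdrop : ∀ X ∈ {X : Traj | {t | X t ≤ c}.Infinite}, X ∈ nearestWalks → X ∈ hits N →
        shiftTraj (hitTime X N) N X ∈ hits (-n) := by
      intro X hX hXw hXN
      obtain ⟨t, htc, ht⟩ := hX.exists_gt (hitTime X N)
      have hk : X (hitTime X N) = N := ((hitTime_eq_iff hXN).1 rfl).1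
      have hY := shiftTraj_mem_nearestWalks hXw (hitTime X N)
      rw [hk] at hY
      have hYt : shiftTraj (hitTime X N) N X (t - hitTime X N) ≤ -n := by
        simp only [shiftTraj, Nat.sub_add_cancel ht.le]
        simp only [Set.mem_ofPred_eq] at htc
        omega
      obtain ⟨v, -, hv⟩ := exists_eq_of_mem_nearestWalks hY (u := t - hitTime X N) (m := -n)
        (by rw [hY.1]; omega) (by rw [hY.1]; omega)
      exact ⟨v, hv⟩
    refine (hg.measure_le_of_shiftTraj_hitTime_mem N (measurableSet_hits _) hdrop).trans
      ((hg.shift N).measure_hits_neg_le hn |>.trans (le_of_eq ?_))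
    congr 1
    have hS : alphaSeries (shiftEnv N ω) = ∑' k, alphaProd ω N k :=
      tsum_congr fun k => by rw [alphaProd_shiftEnv, zero_add]
    rw [alphaProd_shiftEnv, hS, ← tsum_mul_left]
    refine tsum_congr fun k => ?_
    rw [add_comm k, alphaProd_add, hN]
    congr 2
    omega
  have hlim : Tendsto (fun n : ℕ => ENNReal.ofReal (∑' k, alphaProd ω c (k + n))) atTop (𝓝 0) := by
    have h := (ENNReal.continuous_ofReal.tendsto 0).comp (tendsto_sum_nat_add (alphaProd ω c))
    rwa [ENNReal.ofReal_zero] at h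
  refine le_antisymm (ge_of_tendsto hlim ?_) zero_le
  filter_upwards [eventually_ge_atTop (c.natAbs + 1)] with n hn
  exact hbound n (by omega) (by omega)

lemma ae_finite_visits (hg : GoodEnv Pq ω) : ∀ᵐ X ∂Pq ω, ∀ n : ℤ, {t | X t = n}.Finite := by
  refine ae_all_iff.2 fun n => measure_mono_null (fun X hX => ?_) (hg.measure_infinite_le n)
  exact Set.Infinite.mono (fun t ht => le_of_eq ht) hX

lemma ae_finite_neg (hg : GoodEnv Pq ω) : ∀ᵐ X ∂Pq ω, {t | X t < 0}.Finite := by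
  refine measure_mono_null (fun X hX => ?_) (hg.measure_infinite_le (-1))
  exact Set.Infinite.mono (fun t ht => by simp only [Set.mem_ofPred_eq] at ht ⊢; omega) hX

lemma tendsto_measure_negTimesGt (hg : GoodEnv Pq ω) :
    Tendsto (fun m => Pq ω (negTimesGt m)) atTop (𝓝 0) := by
  have := hg.isProbabilityMeasure
  have hanti : Antitone negTimesGt := fun m m' hmm' X ⟨T, hT, hneg⟩ => by
    obtain ⟨T', hT'T, hT'⟩ := T.exists_subset_card_eq (n := m + 1) (by omega)
    exact ⟨T', hT', fun t ht => hneg t (hT'T ht)⟩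
  have hinter : Pq ω (⋂ m, negTimesGt m) = 0 := by
    refine measure_mono_null ?_ hg.ae_finite_neg
    intro X hX hfin
    obtain ⟨T, hT, hneg⟩ := Set.mem_iInter.1 hX (Set.Finite.toFinset hfin).card
    have := Finset.card_le_card fun t ht => (Set.Finite.mem_toFinset hfin).2 (hneg t ht)
    omega
  have h := tendsto_measure_iInter_atTop (μ := Pq ω)
    (fun m => (measurableSet_negTimesGt m).nullMeasurableSet) hanti ⟨0, measure_ne_top _ _⟩
  rwa [hinter] at h

end GoodEnv

/-! ### Occupation time and hitting time -/

section Occupation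

variable {X : Traj}

lemma setOf_mem_band_eq_iUnion (X : Traj) (N : ℕ) :
    {t | 0 ≤ X t ∧ X t < N} = ⋃ i : Fin N, {t | X t = (i : ℕ)} := by
  ext t
  simp only [Set.mem_ofPred_eq, Set.mem_iUnion]
  refine ⟨fun ⟨h₀, h₁⟩ => ⟨⟨(X t).toNat, by omega⟩, by simp; omega⟩, fun ⟨i, hi⟩ => ?_⟩
  rw [hi]
  exact ⟨by positivity, by exact_mod_cast i.2⟩

lemma occTime_eq_ncard (hfin : ∀ n : ℤ, {t | X t = n}.Finite) (N : ℕ) :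
    occTime X N = {t | 0 ≤ X t ∧ X t < N}.ncard := by
  rw [setOf_mem_band_eq_iUnion, Set.ncard_iUnion_of_finite (fun i => hfin _)
    fun i j hij => Set.disjoint_left.2 fun t hi hj =>
      hij (Fin.ext (by simpa using hi.symm.trans hj)),
    finsum_eq_sum_of_fintype, Fin.sum_univ_eq_sum_range (fun n => {t | X t = (n : ℤ)}.ncard)]
  rfl

lemma mem_negTimesGt_of_lt_ncard {m : ℕ} (h : m < {t | X t < 0}.ncard) : X ∈ negTimesGt m := by
  have hfin := Set.finite_of_ncard_pos (m.zero_le.trans_lt h)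
  obtain ⟨T, hT, hcard⟩ := hfin.toFinset.exists_subset_card_eq
    (show m + 1 ≤ hfin.toFinset.card by rw [← Set.ncard_eq_toFinset_card _ hfin]; omega)
  exact ⟨T, hcard, fun t ht => hfin.mem_toFinset.1 (hT ht)⟩

lemma lt_of_lt_hitTime (hX : X ∈ nearestWalks) {N : ℕ} (hN : X ∈ hits N) {t : ℕ}
    (ht : t < hitTime X N) : X t < N := by
  by_contra! hge
  have := hX.1
  obtain ⟨v, hv, hvN⟩ := exists_eq_of_mem_nearestWalks hX (u := t) (m := N) (by omega)
    (by omega)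
  exact ((hitTime_eq_iff hN).1 rfl).2 v (by omega) hvN

lemma abs_occTime_sub_hitTime_le (hX : X ∈ nearestWalks) (hfin : ∀ n : ℤ, {t | X t = n}.Finite)
    (hneg : {t | X t < 0}.Finite) {N : ℕ} (hN : X ∈ hits N) :
    |(occTime X N : ℝ) - hitTime X N| ≤ max ({t | X t < 0}.ncard : ℝ)
      {t | shiftTraj (hitTime X N) N X t < 0}.ncard := by
  set k := hitTime X N
  have hband : {t | 0 ≤ X t ∧ X t < N}.Finite := by
    rw [setOf_mem_band_eq_iUnion]
    exact Set.finite_iUnion fun i => hfin _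
  have hbelow : {t | X t < N}.Finite := (hneg.union hband).subset fun t ht => by
    by_cases h : X t < 0
    · exact Or.inl h
    · exact Or.inr ⟨by omega, ht⟩
  have hk : k = {t | t < k ∧ X t < 0}.ncard + {t | t < k ∧ 0 ≤ X t ∧ X t < N}.ncard := by
    rw [← Set.ncard_union_eq (Set.disjoint_left.2 fun t h₁ h₂ => by
      have := h₁.2; have := h₂.2.1; omega)
      (hneg.subset fun t ht => ht.2) (hband.subset fun t ht => ht.2)]
    convert (Set.ncard_Iio_nat k).symm using 2
    ext t
    have := lt_of_lt_hitTime hX hN (t := t)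
    simp only [Set.mem_union, Set.mem_ofPred_eq, Set.mem_Iio]
    constructor
    · rintro (h | h) <;> exact h.1
    · intro ht
      by_cases h : X t < 0
      · exact Or.inl ⟨ht, h⟩
      · exact Or.inr ⟨ht, by omega, this ht⟩
  have hocc : occTime X N
      = {t | t < k ∧ 0 ≤ X t ∧ X t < N}.ncard + {t | k ≤ t ∧ 0 ≤ X t ∧ X t < N}.ncard := by
    rw [occTime_eq_ncard hfin, ← Set.ncard_union_eq (Set.disjoint_left.2 fun t h₁ h₂ => by
      have := h₁.1; have := h₂.1; omega) (hband.subset fun t ht => ht.2)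
      (hband.subset fun t ht => ht.2)]
    congr 1
    ext t
    simp only [Set.mem_union, Set.mem_ofPred_eq]
    constructor
    · intro h; by_cases ht : t < k <;> [exact Or.inl ⟨ht, h⟩; exact Or.inr ⟨by omega, h⟩]
    · rintro (h | h) <;> exact h.2
  have hB : {t | t < k ∧ X t < 0}.ncard ≤ {t | X t < 0}.ncard :=
    Set.ncard_le_ncard (fun t ht => ht.2) hneg
  have hW : {t | k ≤ t ∧ 0 ≤ X t ∧ X t < N}.ncard ≤ {t | shiftTraj k N X t < 0}.ncard := by
    refine Set.ncard_le_ncard_of_injOn (· - k) (fun t ht => ?_) (fun t ht t' ht' h => ?_)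
      ((hbelow.preimage (f := (· + k)) (add_left_injective k).injOn).subset
        fun t (ht : X (t + k) - N < 0) => show X (t + k) < N by omega)
    · have := ht.2.2
      simp only [Set.mem_ofPred_eq, shiftTraj, Nat.sub_add_cancel ht.1]
      omega
    · have := ht.1; have := ht'.1; simp only at h; omega
  have hk' : (k : ℝ) = {t | t < k ∧ X t < 0}.ncard + {t | t < k ∧ 0 ≤ X t ∧ X t < N}.ncard := by
    exact_mod_cast hk
  have hocc' : (occTime X N : ℝ)
      = {t | t < k ∧ 0 ≤ X t ∧ X t < N}.ncard + {t | k ≤ t ∧ 0 ≤ X t ∧ X t < N}.ncard := by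
    exact_mod_cast hocc
  have hB' := (Nat.cast_le (α := ℝ)).2 hB
  have hW' := (Nat.cast_le (α := ℝ)).2 hW
  rw [abs_sub_le_iff]
  constructor <;> linarith [le_max_left ({t | X t < 0}.ncard : ℝ) {t | shiftTraj k N X t < 0}.ncard,
    le_max_right ({t | X t < 0}.ncard : ℝ) {t | shiftTraj k N X t < 0}.ncard]

end Occupation

lemma GoodEnv.measure_lt_abs_occTime_sub_hitTime_le {Pq : Env → Measure Traj} {ω : Env}
    (hg : GoodEnv Pq ω) (N m : ℕ) :
    Pq ω {X | (m : ℝ) < |(occTime X N : ℝ) - hitTime X N|}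
      ≤ Pq ω (negTimesGt m) + Pq (shiftEnv N ω) (negTimesGt m) := by
  let late : Set Traj := {X | m < {t | shiftTraj (hitTime X N) N X t < 0}.ncard}
  have hsplit : ∀ᵐ X ∂Pq ω, X ∈ {X | (m : ℝ) < |(occTime X N : ℝ) - hitTime X N|} →
      X ∈ negTimesGt m ∪ late := by
    filter_upwards [hg.isQuenchedLaw.ae_mem_nearestWalks, hg.ae_finite_visits, hg.ae_finite_neg,
      hg.ae_mem_hits N] with X hXw hfin hneg hXN hX
    rcases lt_max_iff.1 (hX.trans_le (abs_occTime_sub_hitTime_le hXw hfin hneg hXN)) with h | h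
    · exact Or.inl (mem_negTimesGt_of_lt_ncard (by exact_mod_cast h))
    · exact Or.inr (by exact_mod_cast h)
  calc _ ≤ Pq ω (negTimesGt m ∪ late) := measure_mono_ae hsplit
    _ ≤ Pq ω (negTimesGt m) + Pq ω late := measure_union_le _ _
    _ ≤ _ := add_le_add le_rfl (hg.measure_le_of_shiftTraj_hitTime_mem N
        (measurableSet_negTimesGt m) fun X hX _ _ => mem_negTimesGt_of_lt_ncard hX)

section Annealed

variable {P : Measure Env} {Pq : Env → Measure Traj} {s : ℝ}

lemma tendsto_lintegral_measure_negTimesGt (hEnv : EnvHyp P s) (hWalk : WalkHyp P Pq) :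
    Tendsto (fun m => ∫⁻ ω, Pq ω (negTimesGt m) ∂P) atTop (𝓝 0) := by
  have := hEnv.prob
  simpa using tendsto_lintegral_of_dominated_convergence (f := fun _ => 0) (bound := fun _ => 1)
    (fun m => hWalk.meas _ (measurableSet_negTimesGt m))
    (fun m => by
      filter_upwards [ae_goodEnv hEnv hWalk] with ω hg
      have := hg.isProbabilityMeasure
      exact prob_le_one)
    (by simp) (by
      filter_upwards [ae_goodEnv hEnv hWalk] with ω hg
      exact hg.tendsto_measure_negTimesGt)

lemma lintegral_measure_lt_abs_occTime_sub_hitTime_le (hEnv : EnvHyp P s)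
    (hWalk : WalkHyp P Pq) (N m : ℕ) :
    ∫⁻ ω, Pq ω {X | (m : ℝ) < |(occTime X N : ℝ) - hitTime X N|} ∂P
      ≤ 2 * ∫⁻ ω, Pq ω (negTimesGt m) ∂P := by
  have hmeas : Measurable fun ω => Pq ω (negTimesGt m) := hWalk.meas _ (measurableSet_negTimesGt m)
  calc _ ≤ ∫⁻ ω, (Pq ω (negTimesGt m) + Pq (shiftEnv N ω) (negTimesGt m)) ∂P := by
        refine lintegral_mono_ae ?_
        filter_upwards [ae_goodEnv hEnv hWalk] with ω hg
        exact hg.measure_lt_abs_occTime_sub_hitTime_le N m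
    _ = 2 * ∫⁻ ω, Pq ω (negTimesGt m) ∂P := by
        rw [lintegral_add_left hmeas, hEnv.lintegral_shiftEnv N hmeas, two_mul]

end Annealed

/-- Lemma `LmS-T`: for every `ε > 0`, the annealed probability that
`|T_N − T̃_N| / N^{1/s} > ε` tends to `0` as `N → ∞`. -/
theorem occTime_hitTime_same_asymptotics
    (P : Measure Env) (Pq : Env → Measure Traj) (s : ℝ)
    (hEnv : EnvHyp P s) (hWalk : WalkHyp P Pq) :
    ∀ ε > 0, Tendsto
      (fun N : ℕ => ∫⁻ ω,
        Pq ω {X | ε < |((occTime X N : ℝ) - (hitTime X N : ℝ))| / (N : ℝ) ^ (1 / s)} ∂P)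
      atTop (𝓝 0) := by
  intro ε hε
  let m : ℕ → ℕ := fun N => ⌊ε * (N : ℝ) ^ (1 / s)⌋₊
  have hm : Tendsto m atTop atTop := tendsto_nat_floor_atTop.comp <| Tendsto.const_mul_atTop hε <|
    (tendsto_rpow_atTop (one_div_pos.2 hEnv.spos)).comp tendsto_natCast_atTop_atTop
  have hsub : ∀ N : ℕ, 0 < N →
      {X | ε < |((occTime X N : ℝ) - (hitTime X N : ℝ))| / (N : ℝ) ^ (1 / s)}
        ⊆ {X | (m N : ℝ) < |(occTime X N : ℝ) - hitTime X N|} := fun N hN X hX =>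
    (Nat.floor_le (by positivity)).trans_lt
      ((lt_div_iff₀ (Real.rpow_pos_of_pos (by exact_mod_cast hN) _)).1 hX)
  have hlim := ENNReal.Tendsto.const_mul (a := 2)
    ((tendsto_lintegral_measure_negTimesGt hEnv hWalk).comp hm) (Or.inr ENNReal.ofNat_ne_top)
  rw [mul_zero] at hlim
  refine tendsto_of_tendsto_of_tendsto_of_le_of_le' tendsto_const_nhds hlim
    (Eventually.of_forall fun N => zero_le) ?_
  filter_upwards [eventually_gt_atTop 0] with N hN
  exact (lintegral_mono fun ω => measure_mono (hsub N hN)).trans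
    (lintegral_measure_lt_abs_occTime_sub_hitTime_le hEnv hWalk N (m N))

end RWRE
end
end

section
/- For the three-state absorbing Markov chain with occupation totals η̄, η̿ of states 1, 2: (a) if U_1 ≥ 1 + c and V_2 ≥ 1 + c for some c > 0, then Corr(η̄, η̿ | Y_0 = 1) ≤ Const · q̿/ε = Const · q̿ V_1; (b) if q̿ ≥ c and q̄ ≥ c for some c > 0, then for ε small enough (equivalently U_1 large enough) Corr(η̄, η̿ | Y_0 = 1) ≥ 1 − ε/c and Corr(η̄, η̿ | Y_0 = 1) ≥ 1 − 1/(c U_1). -/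
/-!
The occupation times are read off the Green function `G = ∑ₜ Pᵗ` of the chain. By the Markov
property `P(Yₛ = a, Yₛ₊ₘ = b) = P(Yₛ = a) (Pᵐ)_{ab}`, so splitting the pairs of visit times into
`s ≤ t` and `t < s` gives `E η_a = G_{ia}` and
`E η_a η_b = G_{ia} G_{ab} + G_{ib} (G_{ba} - δ_{ba})`.
In the three-state chain the mass left on the transient states `{1, 2}` decreases by
`ε (Pᵗ)_{a2}` at each step, so `G` is finite there, and first-step analysis gives
`V_a = G_{a2} = 1/ε`, `U_1 = G_{11} = (q̿ + ε)/(q̄ ε)` and `G_{21} = q̿/(q̄ ε)`. Hence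
`Corr(η̄, η̿ | Y₀ = 1) = q̿/(q̿ + ε) · (1 - U₁⁻¹)^{-1/2} (1 - V₁⁻¹)^{-1/2}`. Under (a) each
square-root factor is at most `((1 + c)/c)^{1/2}`; under (b) they are at least `1`, and
`ε/(q̿ + ε)` is at most `ε/c` and equals `1/(q̄ U₁) ≤ 1/(c U₁)`.
-/
open MeasureTheory ProbabilityTheory Filter Set
open scoped ENNReal NNReal Topology Classical

noncomputable section

namespace MC3

/-- Covariance of two real random variables. -/
def mCov {α : Type*} [MeasurableSpace α] (μ : Measure α) (f g : α → ℝ) : ℝ :=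
  ∫ x, f x * g x ∂μ - (∫ x, f x ∂μ) * (∫ x, g x ∂μ)

/-- Correlation coefficient of two real random variables. -/
def mCorr {α : Type*} [MeasurableSpace α] (μ : Measure α) (f g : α → ℝ) : ℝ :=
  mCov μ f g / (Real.sqrt (mCov μ f f) * Real.sqrt (mCov μ g g))

/-- The transition matrix of the three state chain with rows
`(p̄, q̄, 0)`, `(q̿, p̿, ε)`, `(0, 0, 1)`. -/
def mcMatrix (pb qb qq pp e : ℝ) : Fin 3 → Fin 3 → ℝ :=
  ![![pb, qb, 0], ![qq, pp, e], ![0, 0, 1]]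

/-- `μ` is the law of the three-state Markov chain with transition matrix
`mcMatrix pb qb qq pp e` started at the state `i`. -/
structure IsMCLaw (pb qb qq pp e : ℝ) (i : Fin 3) (μ : Measure (ℕ → Fin 3)) : Prop where
  prob : IsProbabilityMeasure μ
  start : μ {Y | Y 0 = i} = 1
  step : ∀ (n : ℕ) (y : ℕ → Fin 3) (j : Fin 3),
    μ {Y | (∀ k ≤ n, Y k = y k) ∧ Y (n+1) = j}
      = ENNReal.ofReal (mcMatrix pb qb qq pp e (y n) j) * μ {Y | ∀ k ≤ n, Y k = y k}

/-- `η̄`: the total number of visits to the state `1` (here `0 : Fin 3`). -/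
def etaA (Y : ℕ → Fin 3) : ℝ := (Set.ncard {t : ℕ | Y t = 0} : ℝ)

/-- `η̿`: the total number of visits to the state `2` (here `1 : Fin 3`). -/
def etaB (Y : ℕ → Fin 3) : ℝ := (Set.ncard {t : ℕ | Y t = 1} : ℝ)

section MarkovChain

variable {ι : Type*} [MeasurableSpace ι]

structure IsMarkovChain (P : Matrix ι ι ℝ) (i : ι) (μ : Measure (ℕ → ι)) : Prop where
  start : μ {Y | Y 0 = i} = 1
  step : ∀ (n : ℕ) (y : ℕ → ι) (j : ι),
    μ {Y | (∀ k ≤ n, Y k = y k) ∧ Y (n+1) = j}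
      = ENNReal.ofReal (P (y n) j) * μ {Y | ∀ k ≤ n, Y k = y k}

lemma measurableSet_eval_eq [MeasurableSingletonClass ι] (t : ℕ) (a : ι) :
    MeasurableSet {Y : ℕ → ι | Y t = a} :=
  (measurableSet_singleton a).preimage (measurable_pi_apply t)

namespace IsMarkovChain

variable {P : Matrix ι ι ℝ} {i : ι} {μ : Measure (ℕ → ι)}

local notation "past" => Preorder.frestrictLe (π := fun _ : ℕ => ι)

lemma measure_frestrictLe_singleton_inter_eval_succ (hμ : IsMarkovChain P i μ) (n : ℕ)
    (w : Finset.Iic n → ι) (j : ι) :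
    μ (past n ⁻¹' {w} ∩ {Y | Y (n+1) = j})
      = ENNReal.ofReal (P (w ⟨n, Finset.mem_Iic.2 le_rfl⟩) j) * μ (past n ⁻¹' {w}) := by
  rcases (past n ⁻¹' {w}).eq_empty_or_nonempty with hw | ⟨y, rfl⟩
  · simp [hw]
  have hcyl : past n ⁻¹' {past n y} = {Y | ∀ k ≤ n, Y k = y k} := by
    ext Y
    simp [funext_iff, Finset.mem_Iic]
  rw [hcyl]
  exact hμ.step n y j

variable [Fintype ι] [MeasurableSingletonClass ι]

lemma measure_frestrictLe_preimage_inter_eval_succ (hμ : IsMarkovChain P i μ) (n : ℕ)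
    (S : Set (Finset.Iic n → ι)) (j : ι) :
    μ (past n ⁻¹' S ∩ {Y | Y (n+1) = j})
      = ∑ k, ENNReal.ofReal (P k j) * μ (past n ⁻¹' S ∩ {Y | Y n = k}) := by
  have hfib : ∀ (B : Set (ℕ → ι)), MeasurableSet B → μ (past n ⁻¹' S ∩ B)
      = ∑ w ∈ S.toFinset, μ (past n ⁻¹' {w} ∩ B) := by
    intro B hB
    have := sum_measure_preimage_singleton (μ := μ.restrict B) S.toFinset
      fun w _ => Preorder.measurable_frestrictLe n (measurableSet_singleton w)
    rw [Set.coe_toFinset] at this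
    simp only [← Measure.restrict_apply' hB, this]
  have hlast : ∀ w k, past n ⁻¹' {w} ∩ {Y : ℕ → ι | Y n = k}
      = if w ⟨n, Finset.mem_Iic.2 le_rfl⟩ = k then past n ⁻¹' {w} else ∅ := by
    intro w k
    split_ifs with h
    · refine Set.inter_eq_left.2 fun Y hY => ?_
      subst h
      simp only [Set.mem_preimage, Set.mem_singleton_iff] at hY
      simp [← hY]
    · refine Set.eq_empty_of_forall_notMem fun Y ⟨hY, hYk⟩ => h ?_
      simp only [Set.mem_preimage, Set.mem_singleton_iff] at hY
      simpa [← hY] using hYk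
  simp_rw [hfib _ (measurableSet_eval_eq _ _), Finset.mul_sum, hlast, apply_ite μ,
    measure_empty, mul_ite, mul_zero]
  rw [Finset.sum_comm]
  simp [measure_frestrictLe_singleton_inter_eval_succ hμ]

variable [DecidableEq ι]

lemma measure_eval_inter_eval_add (hμ : IsMarkovChain P i μ) (hP : ∀ a b, 0 ≤ P a b)
    (s m : ℕ) (a b : ι) :
    μ ({Y | Y s = a} ∩ {Y | Y (s + m) = b}) = μ {Y | Y s = a} * ENNReal.ofReal ((P ^ m) a b) := by
  induction m generalizing b with
  | zero =>
    by_cases hab : a = b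
    · simp [hab]
    · rw [pow_zero, Matrix.one_apply_ne hab, ENNReal.ofReal_zero, mul_zero]
      exact measure_mono_null (fun Y ⟨ha, hb⟩ => hab (ha.symm.trans hb)) measure_empty
  | succ m ih =>
    have hpast : {Y : ℕ → ι | Y s = a} = past (s + m) ⁻¹'
        {w | w ⟨s, Finset.mem_Iic.2 (Nat.le_add_right s m)⟩ = a} := rfl
    rw [← add_assoc, hpast, measure_frestrictLe_preimage_inter_eval_succ hμ, ← hpast]
    simp_rw [ih, pow_succ, Matrix.mul_apply]
    rw [ENNReal.ofReal_sum_of_nonneg fun k _ =>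
      mul_nonneg (Matrix.pow_apply_nonneg hP m a k) (hP k b), Finset.mul_sum]
    refine Finset.sum_congr rfl fun k _ => ?_
    rw [ENNReal.ofReal_mul (Matrix.pow_apply_nonneg hP m a k)]
    ring

lemma measure_eval_eq [IsProbabilityMeasure μ] (hμ : IsMarkovChain P i μ)
    (hP : ∀ a b, 0 ≤ P a b) (t : ℕ) (b : ι) :
    μ {Y | Y t = b} = ENNReal.ofReal ((P ^ t) i b) := by
  have hstart : μ {Y | Y 0 = i}ᶜ = 0 :=
    (prob_compl_eq_zero_iff (measurableSet_eval_eq 0 i)).2 hμ.start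
  have := hμ.measure_eval_inter_eval_add hP 0 t i b
  rwa [Set.inter_comm, measure_inter_conull hstart, hμ.start, one_mul, zero_add] at this

end IsMarkovChain

end MarkovChain

lemma ENNReal.tsum_ite_le_eq_tsum_add (f : ℕ → ℝ≥0∞) (k : ℕ) :
    ∑' t, (if k ≤ t then f t else 0) = ∑' m, f (k + m) := by
  rw [← (add_right_injective k).tsum_eq]
  · simp
  · intro t ht
    have hkt : k ≤ t := by
      by_contra h
      exact ht (if_neg h)
    exact ⟨t - k, by simp only; omega⟩

lemma ENNReal.tsum_tsum_eq_tsum_tsum_add_tsum_tsum (g : ℕ → ℕ → ℝ≥0∞) :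
    ∑' s, ∑' t, g s t = ∑' s, ∑' m, g s (s + m) + ∑' t, ∑' m, g (t + 1 + m) t := by
  have hsplit : ∀ s t, g s t = (if s ≤ t then g s t else 0) + (if t + 1 ≤ s then g s t else 0) := by
    intro s t
    by_cases h : s ≤ t
    · simp [h, show ¬ t + 1 ≤ s by omega]
    · simp [h, show t + 1 ≤ s by omega]
  conv_lhs => enter [1, s, 1, t]; rw [hsplit s t]
  simp_rw [ENNReal.tsum_add, ENNReal.tsum_ite_le_eq_tsum_add]
  rw [ENNReal.tsum_comm (f := fun s t => if t + 1 ≤ s then g s t else 0)]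
  simp_rw [ENNReal.tsum_ite_le_eq_tsum_add (g · _)]

section Visits

variable {ι : Type*}

def visits (a : ι) (Y : ℕ → ι) : ℝ≥0∞ := ∑' t, {Y' : ℕ → ι | Y' t = a}.indicator 1 Y

lemma visits_eq_encard (a : ι) (Y : ℕ → ι) : visits a Y = {t | Y t = a}.encard := by
  rw [← ENNReal.tsum_set_one, tsum_subtype {t | Y t = a} (fun _ => 1)]
  rfl

/-- Both sides are `0` when `Y` visits `a` infinitely often. -/
lemma ncard_eq_toReal_visits (a : ι) (Y : ℕ → ι) :
    ({t | Y t = a}.ncard : ℝ) = (visits a Y).toReal := by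
  rw [visits_eq_encard, Set.ncard_def]
  cases {t | Y t = a}.encard with
  | top => simp
  | coe n => simp

lemma measurable_visits [MeasurableSpace ι] [MeasurableSingletonClass ι] (a : ι) :
    Measurable (visits a) :=
  Measurable.tsum fun t => measurable_one.indicator (measurableSet_eval_eq t a)

end Visits

section Green

variable {ι : Type*} [Fintype ι] [DecidableEq ι]

def green (P : Matrix ι ι ℝ) (a b : ι) : ℝ := ∑' t, (P ^ t) a b

variable {P : Matrix ι ι ℝ}

lemma ofReal_green (hP : ∀ a b, 0 ≤ P a b) {a b : ι} (h : Summable fun t => (P ^ t) a b) :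
    ENNReal.ofReal (green P a b) = ∑' t, ENNReal.ofReal ((P ^ t) a b) :=
  ENNReal.ofReal_tsum_of_nonneg (fun t => Matrix.pow_apply_nonneg hP t a b) h

lemma ofReal_green_sub_one (hP : ∀ a b, 0 ≤ P a b) {a b : ι}
    (h : Summable fun t => (P ^ t) a b) :
    ENNReal.ofReal (green P a b - (1 : Matrix ι ι ℝ) a b)
      = ∑' t, ENNReal.ofReal ((P ^ (t + 1)) a b) := by
  rw [green, h.tsum_eq_zero_add, pow_zero, add_sub_cancel_left]
  exact ENNReal.ofReal_tsum_of_nonneg (fun t => Matrix.pow_apply_nonneg hP _ a b)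
    ((summable_nat_add_iff 1).2 h)

lemma green_nonneg (hP : ∀ a b, 0 ≤ P a b) (a b : ι) : 0 ≤ green P a b :=
  tsum_nonneg fun t => Matrix.pow_apply_nonneg hP t a b

lemma one_le_green (hP : ∀ a b, 0 ≤ P a b) {a b : ι} (h : Summable fun t => (P ^ t) a b) :
    (1 : Matrix ι ι ℝ) a b ≤ green P a b := by
  rw [green, h.tsum_eq_zero_add, pow_zero, le_add_iff_nonneg_right]
  exact tsum_nonneg fun t => Matrix.pow_apply_nonneg hP _ a b

end Green

namespace IsMarkovChain

variable {ι : Type*} [MeasurableSpace ι] [Fintype ι] [DecidableEq ι] [MeasurableSingletonClass ι]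
  {P : Matrix ι ι ℝ} {i : ι} {μ : Measure (ℕ → ι)} [IsProbabilityMeasure μ]

lemma lintegral_visits (hμ : IsMarkovChain P i μ) (hP : ∀ a b, 0 ≤ P a b) (a : ι) :
    ∫⁻ Y, visits a Y ∂μ = ∑' t, ENNReal.ofReal ((P ^ t) i a) := by
  simp only [visits]
  rw [lintegral_tsum fun t => (measurable_one.indicator (measurableSet_eval_eq t a)).aemeasurable]
  simp_rw [lintegral_indicator_one (measurableSet_eval_eq _ _), hμ.measure_eval_eq hP]

lemma lintegral_visits_mul_visits (hμ : IsMarkovChain P i μ) (hP : ∀ a b, 0 ≤ P a b) (a b : ι) :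
    ∫⁻ Y, visits a Y * visits b Y ∂μ
      = (∑' s, ENNReal.ofReal ((P ^ s) i a)) * ∑' m, ENNReal.ofReal ((P ^ m) a b)
        + (∑' t, ENNReal.ofReal ((P ^ t) i b)) * ∑' m, ENNReal.ofReal ((P ^ (m + 1)) b a) := by
  have hmeas : ∀ s t, MeasurableSet ({Y : ℕ → ι | Y s = a} ∩ {Y | Y t = b}) :=
    fun s t => (measurableSet_eval_eq s a).inter (measurableSet_eval_eq t b)
  have hprod : ∀ Y, visits a Y * visits b Y
      = ∑' s, ∑' t, ({Y : ℕ → ι | Y s = a} ∩ {Y | Y t = b}).indicator 1 Y := by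
    intro Y
    simp_rw [visits, ← ENNReal.tsum_mul_right, ← ENNReal.tsum_mul_left, Set.inter_indicator_one]
    rfl
  simp_rw [hprod]
  rw [lintegral_tsum fun s => (Measurable.tsum fun t =>
    measurable_one.indicator (hmeas s t)).aemeasurable]
  simp_rw [lintegral_tsum fun t => (measurable_one.indicator (hmeas _ t)).aemeasurable,
    lintegral_indicator_one (hmeas _ _)]
  rw [ENNReal.tsum_tsum_eq_tsum_tsum_add_tsum_tsum]
  simp_rw [Set.inter_comm {Y : ℕ → ι | Y (_ + 1 + _) = a}, add_assoc, add_comm 1,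
    hμ.measure_eval_inter_eval_add hP, hμ.measure_eval_eq hP, ENNReal.tsum_mul_left,
    ENNReal.tsum_mul_right]

lemma integral_toReal_visits (hμ : IsMarkovChain P i μ) (hP : ∀ a b, 0 ≤ P a b) {a : ι}
    (ha : Summable fun t => (P ^ t) i a) :
    ∫ Y, (visits a Y).toReal ∂μ = green P i a := by
  have hlint : ∫⁻ Y, visits a Y ∂μ = ENNReal.ofReal (green P i a) := by
    rw [hμ.lintegral_visits hP, ofReal_green hP ha]
  rw [integral_toReal (measurable_visits a).aemeasurable
    (ae_lt_top (measurable_visits a) (by simp [hlint])), hlint,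
    ENNReal.toReal_ofReal (green_nonneg hP i a)]

lemma integral_toReal_visits_mul (hμ : IsMarkovChain P i μ) (hP : ∀ a b, 0 ≤ P a b) {a b : ι}
    (ha : ∀ x, Summable fun t => (P ^ t) x a) (hb : ∀ x, Summable fun t => (P ^ t) x b) :
    ∫ Y, (visits a Y).toReal * (visits b Y).toReal ∂μ
      = green P i a * green P a b + green P i b * (green P b a - (1 : Matrix ι ι ℝ) b a) := by
  have hfirst := mul_nonneg (green_nonneg hP i a) (green_nonneg hP a b)
  have hsecond := mul_nonneg (green_nonneg hP i b) (sub_nonneg.2 (one_le_green hP (ha b)))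
  have hlint : ∫⁻ Y, visits a Y * visits b Y ∂μ = ENNReal.ofReal
      (green P i a * green P a b + green P i b * (green P b a - (1 : Matrix ι ι ℝ) b a)) := by
    rw [hμ.lintegral_visits_mul_visits hP, ← ofReal_green hP (ha i), ← ofReal_green hP (hb a),
      ← ofReal_green hP (hb i), ← ofReal_green_sub_one hP (ha b),
      ← ENNReal.ofReal_mul (green_nonneg hP i a), ← ENNReal.ofReal_mul (green_nonneg hP i b),
      ENNReal.ofReal_add hfirst hsecond]
  have hmeas : Measurable fun Y => visits a Y * visits b Y :=
    (measurable_visits a).mul (measurable_visits b)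
  simp_rw [← ENNReal.toReal_mul]
  rw [integral_toReal hmeas.aemeasurable (ae_lt_top hmeas (by simp [hlint])), hlint,
    ENNReal.toReal_ofReal (add_nonneg hfirst hsecond)]

lemma mCov_toReal_visits (hμ : IsMarkovChain P i μ) (hP : ∀ a b, 0 ≤ P a b) {a b : ι}
    (ha : ∀ x, Summable fun t => (P ^ t) x a) (hb : ∀ x, Summable fun t => (P ^ t) x b) :
    mCov μ (fun Y => (visits a Y).toReal) (fun Y => (visits b Y).toReal)
      = green P i a * green P a b + green P i b * (green P b a - (1 : Matrix ι ι ℝ) b a)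
        - green P i a * green P i b := by
  rw [mCov, hμ.integral_toReal_visits_mul hP ha hb, hμ.integral_toReal_visits hP (ha i),
    hμ.integral_toReal_visits hP (hb i)]

end IsMarkovChain

lemma Real.sqrt_sq_sub_self {U : ℝ} (hU : 0 < U) : √(U ^ 2 - U) = U * √(1 - U⁻¹) := by
  rw [show U ^ 2 - U = U ^ 2 * (1 - U⁻¹) by field_simp, Real.sqrt_mul (sq_nonneg U),
    Real.sqrt_sq hU.le]

lemma div_sqrt_mul_sqrt_le {c x U V : ℝ} (hc : 0 < c) (hx : 0 ≤ x) (hU : 1 + c ≤ U)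
    (hV : 1 + c ≤ V) : x / (√(1 - U⁻¹) * √(1 - V⁻¹)) ≤ (1 + c) / c * x := by
  have hd : c / (1 + c) = 1 - (1 + c)⁻¹ := by field_simp; ring
  have hUd : c / (1 + c) ≤ 1 - U⁻¹ := by rw [hd]; gcongr
  have hVd : c / (1 + c) ≤ 1 - V⁻¹ := by rw [hd]; gcongr
  have hd_pos : 0 < √(c / (1 + c)) := Real.sqrt_pos.2 (by positivity)
  calc x / (√(1 - U⁻¹) * √(1 - V⁻¹)) ≤ x / (√(c / (1 + c)) * √(c / (1 + c))) := by gcongr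
    _ = (1 + c) / c * x := by
        rw [Real.mul_self_sqrt (by positivity)]
        field_simp

lemma le_div_sqrt_mul_sqrt {x U V : ℝ} (hx : 0 ≤ x) (hU : 1 < U) (hV : 1 < V) :
    x ≤ x / (√(1 - U⁻¹) * √(1 - V⁻¹)) := by
  have hU' : 0 < U⁻¹ ∧ U⁻¹ < 1 := ⟨inv_pos.2 (zero_lt_one.trans hU), inv_lt_one_of_one_lt₀ hU⟩
  have hV' : 0 < V⁻¹ ∧ V⁻¹ < 1 := ⟨inv_pos.2 (zero_lt_one.trans hV), inv_lt_one_of_one_lt₀ hV⟩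
  refine le_div_self hx (mul_pos (Real.sqrt_pos.2 (by linarith)) (Real.sqrt_pos.2 (by linarith)))
    (mul_le_one₀ (Real.sqrt_le_one.2 (by linarith)) (Real.sqrt_nonneg _)
      (Real.sqrt_le_one.2 (by linarith)))

section ThreeStateChain

/-- `mcMatrix` has a plain function type, on which `^` would be the entrywise power. -/
def transitionMatrix (pb qb qq pp e : ℝ) : Matrix (Fin 3) (Fin 3) ℝ :=
  Matrix.of (mcMatrix pb qb qq pp e)

structure ChainParams (pb qb qq pp e : ℝ) : Prop where
  pb_nonneg : 0 ≤ pb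
  qb_pos : 0 < qb
  qq_nonneg : 0 ≤ qq
  pp_nonneg : 0 ≤ pp
  e_pos : 0 < e
  row_zero : pb + qb = 1
  row_one : qq + pp + e = 1

variable {pb qb qq pp e : ℝ}

local notation "𝐏" => transitionMatrix pb qb qq pp e

lemma IsMCLaw.isMarkovChain {i : Fin 3} {μ : Measure (ℕ → Fin 3)}
    (hμ : IsMCLaw pb qb qq pp e i μ) : IsMarkovChain 𝐏 i μ :=
  ⟨hμ.start, hμ.step⟩

lemma transitionMatrix_pow_succ_apply_zero (t : ℕ) (a : Fin 3) :
    (𝐏 ^ (t + 1)) a 0 = (𝐏 ^ t) a 0 * pb + (𝐏 ^ t) a 1 * qq := by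
  simp [pow_succ, Matrix.mul_apply, Fin.sum_univ_three, transitionMatrix, mcMatrix]

lemma transitionMatrix_pow_succ_apply_one (t : ℕ) (a : Fin 3) :
    (𝐏 ^ (t + 1)) a 1 = (𝐏 ^ t) a 0 * qb + (𝐏 ^ t) a 1 * pp := by
  simp [pow_succ, Matrix.mul_apply, Fin.sum_univ_three, transitionMatrix, mcMatrix]

namespace ChainParams

lemma transitionMatrix_nonneg (h : ChainParams pb qb qq pp e) : ∀ a b, 0 ≤ 𝐏 a b := by
  have := h.pb_nonneg; have := h.qb_pos.le; have := h.qq_nonneg; have := h.pp_nonneg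
  have := h.e_pos.le
  intro a b
  fin_cases a <;> fin_cases b <;> simp [transitionMatrix, mcMatrix] <;> assumption

/-- The mass `(𝐏 ^ t) a 0 + (𝐏 ^ t) a 1` left on the transient states drops by `e * (𝐏 ^ t) a 1`
at each step. -/
lemma summable_pow_apply_one (h : ChainParams pb qb qq pp e) (a : Fin 3) :
    Summable fun t => (𝐏 ^ t) a 1 := by
  have hnonneg := Matrix.pow_apply_nonneg h.transitionMatrix_nonneg
  have htelescope : ∀ T, e * ∑ t ∈ Finset.range T, (𝐏 ^ t) a 1 + ((𝐏 ^ T) a 0 + (𝐏 ^ T) a 1)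
      = (𝐏 ^ 0) a 0 + (𝐏 ^ 0) a 1 := by
    intro T
    induction T with
    | zero => simp
    | succ T ih =>
      rw [Finset.sum_range_succ, transitionMatrix_pow_succ_apply_zero,
        transitionMatrix_pow_succ_apply_one, ← ih]
      linear_combination (𝐏 ^ T) a 0 * h.row_zero + (𝐏 ^ T) a 1 * h.row_one
  refine summable_of_sum_range_le (c := ((𝐏 ^ 0) a 0 + (𝐏 ^ 0) a 1) / e)
    (fun t => hnonneg t a 1) fun T => ?_
  rw [le_div_iff₀ h.e_pos, ← htelescope T]
  nlinarith [hnonneg T a 0, hnonneg T a 1]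

lemma summable_pow_apply_zero (h : ChainParams pb qb qq pp e) (a : Fin 3) :
    Summable fun t => (𝐏 ^ t) a 0 := by
  have hnonneg := Matrix.pow_apply_nonneg h.transitionMatrix_nonneg
  refine (((summable_nat_add_iff 1).2 (h.summable_pow_apply_one a)).div_const qb).of_nonneg_of_le
    (fun t => hnonneg t a 0) fun t => ?_
  rw [le_div_iff₀ h.qb_pos, transitionMatrix_pow_succ_apply_one]
  nlinarith [hnonneg t a 1, h.pp_nonneg]

lemma green_apply_zero_eq_one_add (h : ChainParams pb qb qq pp e) (a : Fin 3) :
    green 𝐏 a 0 = (1 : Matrix (Fin 3) (Fin 3) ℝ) a 0 + green 𝐏 a 0 * pb + green 𝐏 a 1 * qq := by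
  calc green 𝐏 a 0 = (𝐏 ^ 0) a 0 + ∑' t, (𝐏 ^ (t + 1)) a 0 :=
        (h.summable_pow_apply_zero a).tsum_eq_zero_add
    _ = _ := by
      simp_rw [transitionMatrix_pow_succ_apply_zero]
      rw [((h.summable_pow_apply_zero a).mul_right pb).tsum_add
        ((h.summable_pow_apply_one a).mul_right qq), tsum_mul_right, tsum_mul_right, pow_zero,
        add_assoc]
      rfl

lemma green_apply_one_eq_one_add (h : ChainParams pb qb qq pp e) (a : Fin 3) :
    green 𝐏 a 1 = (1 : Matrix (Fin 3) (Fin 3) ℝ) a 1 + green 𝐏 a 0 * qb + green 𝐏 a 1 * pp := by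
  calc green 𝐏 a 1 = (𝐏 ^ 0) a 1 + ∑' t, (𝐏 ^ (t + 1)) a 1 :=
        (h.summable_pow_apply_one a).tsum_eq_zero_add
    _ = _ := by
      simp_rw [transitionMatrix_pow_succ_apply_one]
      rw [((h.summable_pow_apply_zero a).mul_right qb).tsum_add
        ((h.summable_pow_apply_one a).mul_right pp), tsum_mul_right, tsum_mul_right, pow_zero,
        add_assoc]
      rfl

lemma green_apply_one (h : ChainParams pb qb qq pp e) {a : Fin 3} (ha : a ≠ 2) :
    green 𝐏 a 1 = 1 / e := by
  have h0 := h.green_apply_zero_eq_one_add a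
  have h1 := h.green_apply_one_eq_one_add a
  have hδ : (1 : Matrix (Fin 3) (Fin 3) ℝ) a 0 + (1 : Matrix (Fin 3) (Fin 3) ℝ) a 1 = 1 := by
    fin_cases a <;> simp [Matrix.one_apply] at ha ⊢
  rw [eq_div_iff h.e_pos.ne']
  linear_combination h0 + h1 + green 𝐏 a 0 * h.row_zero + green 𝐏 a 1 * h.row_one + hδ

lemma green_apply_zero (h : ChainParams pb qb qq pp e) {a : Fin 3} (ha : a ≠ 2) :
    green 𝐏 a 0 = (qq + (1 : Matrix (Fin 3) (Fin 3) ℝ) a 0 * e) / (qb * e) := by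
  have h0 := h.green_apply_zero_eq_one_add a
  have h1 : e * green 𝐏 a 1 = 1 := by
    rw [h.green_apply_one ha]
    field_simp [h.e_pos.ne']
  rw [eq_div_iff (mul_pos h.qb_pos h.e_pos).ne']
  linear_combination e * h0 + qq * h1 + e * green 𝐏 a 0 * h.row_zero

end ChainParams

lemma etaA_eq_toReal_visits : etaA = fun Y => (visits 0 Y).toReal :=
  funext (ncard_eq_toReal_visits 0)

lemma etaB_eq_toReal_visits : etaB = fun Y => (visits 1 Y).toReal :=
  funext (ncard_eq_toReal_visits 1)

namespace IsMCLaw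

variable {i : Fin 3} {μ : Measure (ℕ → Fin 3)}

lemma integral_etaA (h : ChainParams pb qb qq pp e) (hμ : IsMCLaw pb qb qq pp e i μ)
    (hi : i ≠ 2) :
    ∫ Y, etaA Y ∂μ = (qq + (1 : Matrix (Fin 3) (Fin 3) ℝ) i 0 * e) / (qb * e) := by
  have := hμ.prob
  rw [etaA_eq_toReal_visits, hμ.isMarkovChain.integral_toReal_visits h.transitionMatrix_nonneg
    (h.summable_pow_apply_zero i), h.green_apply_zero hi]

lemma integral_etaB (h : ChainParams pb qb qq pp e) (hμ : IsMCLaw pb qb qq pp e i μ)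
    (hi : i ≠ 2) :
    ∫ Y, etaB Y ∂μ = 1 / e := by
  have := hμ.prob
  rw [etaB_eq_toReal_visits, hμ.isMarkovChain.integral_toReal_visits h.transitionMatrix_nonneg
    (h.summable_pow_apply_one i), h.green_apply_one hi]

lemma mCorr_etaA_etaB (h : ChainParams pb qb qq pp e) (hμ : IsMCLaw pb qb qq pp e 0 μ) :
    mCorr μ etaA etaB
      = qq / (qq + e) / (√(1 - (∫ Y, etaA Y ∂μ)⁻¹) * √(1 - (∫ Y, etaB Y ∂μ)⁻¹)) := by
  have := hμ.prob
  have := h.qb_pos; have := h.e_pos; have := h.qq_nonneg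
  have hP := h.transitionMatrix_nonneg
  have hA := h.summable_pow_apply_zero
  have hB := h.summable_pow_apply_one
  have hM := hμ.isMarkovChain
  have hU : 0 < green 𝐏 0 0 := by
    rw [h.green_apply_zero (by decide), Matrix.one_apply_eq, one_mul]
    positivity
  have hV : 0 < green 𝐏 0 1 := by
    rw [h.green_apply_one (by decide)]
    positivity
  have hG11 : green 𝐏 1 1 = green 𝐏 0 1 := by
    rw [h.green_apply_one (by decide), h.green_apply_one (by decide)]
  have hG10 : green 𝐏 1 0 = qq / (qq + e) * green 𝐏 0 0 := by
    rw [h.green_apply_zero (by decide), h.green_apply_zero (by decide), Matrix.one_apply_eq,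
      Matrix.one_apply_ne (by decide : (1 : Fin 3) ≠ 0), zero_mul, add_zero, one_mul]
    field_simp
  rw [mCorr, etaA_eq_toReal_visits, etaB_eq_toReal_visits, hM.mCov_toReal_visits hP hA hB,
    hM.mCov_toReal_visits hP hA hA, hM.mCov_toReal_visits hP hB hB,
    hM.integral_toReal_visits hP (hA 0), hM.integral_toReal_visits hP (hB 0), hG11, hG10,
    Matrix.one_apply_eq, Matrix.one_apply_eq, Matrix.one_apply_ne (by decide : (1 : Fin 3) ≠ 0)]
  set U := green 𝐏 0 0
  set V := green 𝐏 0 1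
  rw [show U * U + U * (U - 1) - U * U = U ^ 2 - U by ring,
    show V * V + V * (V - 1) - V * V = V ^ 2 - V by ring, Real.sqrt_sq_sub_self hU,
    Real.sqrt_sq_sub_self hV, mul_mul_mul_comm, ← div_div,
    show U * V + V * (qq / (qq + e) * U - 0) - U * V = qq / (qq + e) * (U * V) by ring,
    mul_div_cancel_right₀ _ (mul_pos hU hV).ne']

lemma mCorr_etaA_etaB_le {c : ℝ} (hc : 0 < c) (h : ChainParams pb qb qq pp e)
    (hμ : IsMCLaw pb qb qq pp e 0 μ) (hU : 1 + c ≤ ∫ Y, etaA Y ∂μ) (hV : 1 + c ≤ 1 / e) :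
    mCorr μ etaA etaB ≤ (1 + c) / c * qq / e := by
  have := h.qq_nonneg
  have := h.e_pos
  rw [← hμ.integral_etaB h (by decide)] at hV
  calc mCorr μ etaA etaB ≤ (1 + c) / c * (qq / (qq + e)) := by
        rw [hμ.mCorr_etaA_etaB h]
        exact div_sqrt_mul_sqrt_le hc (by positivity) hU hV
    _ ≤ (1 + c) / c * (qq / e) := by
        gcongr
        linarith
    _ = (1 + c) / c * qq / e := by ring

lemma le_mCorr_etaA_etaB {c : ℝ} (hc : 0 < c) (h : ChainParams pb qb qq pp e)
    (hμ : IsMCLaw pb qb qq pp e 0 μ) (hcq : c ≤ qq) (hcb : c ≤ qb) :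
    1 - e / c ≤ mCorr μ etaA etaB ∧ 1 - 1 / (c * ∫ Y, etaA Y ∂μ) ≤ mCorr μ etaA etaB := by
  have hqq : 0 < qq := hc.trans_le hcq
  have he := h.e_pos
  have hU : ∫ Y, etaA Y ∂μ = (qq + e) / (qb * e) := by
    rw [hμ.integral_etaA h (by decide), Matrix.one_apply_eq, one_mul]
  have hU1 : 1 < ∫ Y, etaA Y ∂μ := by
    rw [hU, one_lt_div (mul_pos h.qb_pos he)]
    nlinarith [h.row_zero, h.pb_nonneg]
  have hV1 : 1 < ∫ Y, etaB Y ∂μ := by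
    rw [hμ.integral_etaB h (by decide), one_lt_div he]
    linarith [h.row_one, h.pp_nonneg]
  have hlow : 1 - e / (qq + e) ≤ mCorr μ etaA etaB := by
    rw [hμ.mCorr_etaA_etaB h, show 1 - e / (qq + e) = qq / (qq + e) by field_simp; ring]
    exact le_div_sqrt_mul_sqrt (by positivity) hU1 hV1
  refine ⟨le_trans ?_ hlow, le_trans ?_ hlow⟩
  · gcongr
    linarith
  · rw [sub_le_sub_iff_left, hU, show 1 / (c * ((qq + e) / (qb * e))) = qb / c * (e / (qq + e)) by
      field_simp]
    exact le_mul_of_one_le_left (by positivity) ((one_le_div hc).2 hcb)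

end IsMCLaw

end ThreeStateChain

/-- Lemma `LmCorEst`: correlation estimates for the three-state
absorbing chain: (a) if `U₁, V₂ ≥ 1 + c` then `Corr(η̄, η̿ | Y₀ = 1) ≤ Const · q̿/ε`
(`= Const · q̿ V₁`); (b) if `q̿ ≥ c` and `q̄ ≥ c` then for `ε` small enough
(equivalently `U₁` large enough) `Corr ≥ 1 − ε/c` and `Corr ≥ 1 − 1/(c U₁)`. -/
theorem mc_correlation_estimates :
    -- part (a)
    (∀ c > (0:ℝ), ∃ C > (0:ℝ),
      ∀ (pb qb qq pp e : ℝ),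
        0 ≤ pb → 0 < qb → 0 ≤ qq → 0 ≤ pp → 0 < e →
        pb + qb = 1 → qq + pp + e = 1 →
        ∀ (μ1 μ2 : Measure (ℕ → Fin 3)),
          IsMCLaw pb qb qq pp e 0 μ1 → IsMCLaw pb qb qq pp e 1 μ2 →
          1 + c ≤ (∫ Y, etaA Y ∂μ1) → 1 + c ≤ (∫ Y, etaB Y ∂μ2) →
          mCorr μ1 etaA etaB ≤ C * qq / e ∧
          mCorr μ1 etaA etaB ≤ C * qq * (∫ Y, etaB Y ∂μ1)) ∧
    -- part (b)
    (∀ c > (0:ℝ), ∃ ε₀ > (0:ℝ),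
      ∀ (pb qb qq pp e : ℝ),
        0 ≤ pb → 0 < qb → 0 ≤ qq → 0 ≤ pp → 0 < e →
        pb + qb = 1 → qq + pp + e = 1 →
        c ≤ qq → c ≤ qb → e < ε₀ →
        ∀ (μ1 μ2 : Measure (ℕ → Fin 3)),
          IsMCLaw pb qb qq pp e 0 μ1 → IsMCLaw pb qb qq pp e 1 μ2 →
          1 - e / c ≤ mCorr μ1 etaA etaB ∧
          1 - 1 / (c * (∫ Y, etaA Y ∂μ1)) ≤ mCorr μ1 etaA etaB) := by
  refine ⟨fun c hc => ⟨(1 + c) / c, by positivity, ?_⟩, fun c hc => ⟨1, one_pos, ?_⟩⟩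
  · intro pb qb qq pp e hpb hqb hqq hpp he h1 h2 μ1 μ2 hμ1 hμ2 hU hV
    have h : ChainParams pb qb qq pp e := ⟨hpb, hqb, hqq, hpp, he, h1, h2⟩
    rw [hμ2.integral_etaB h (by decide)] at hV
    have hle := hμ1.mCorr_etaA_etaB_le hc h hU hV
    refine ⟨hle, ?_⟩
    rwa [hμ1.integral_etaB h (by decide), mul_one_div]
  · intro pb qb qq pp e hpb hqb hqq hpp he h1 h2 hcq hcb _ μ1 μ2 hμ1 _
    exact hμ1.le_mCorr_etaA_etaB hc ⟨hpb, hqb, hqq, hpp, he, h1, h2⟩ hcq hcb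

end MC3
end
end
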